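/- arXiv:2309.11868 — 11 statements merged into one kernel-verified Lean document; each statement's English description precedes it below -/
import Mathlib

section
/- For a monotone measure ν on a measurable space (U, 𝒰), a nonnegative measurable function f, and A ∈ 𝒰, the Choquet integral of f over A equals the limit as n → ∞ of the Choquet integral of min(f, n) over A. -/
open MeasureTheory Filter Set
open scoped NNReal ENNReal NNRat

variable {U : Type*}

/-- The Choquet integral of `f` w.r.t. the set function `ν` on the set `A`:
`∫₀^∞ ν({f ≥ t} ∩ A) dt`. -/
noncomputable def Choquet [MeasurableSpace U] (ν : Set U → ENNReal) (f : U → ENNReal)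
    (A : Set U) : ENNReal :=
  ∫⁻ t in Set.Ioi (0 : ℝ), ν ({x | ENNReal.ofReal t ≤ f x} ∩ A)

/-- A monotone measure: vanishes at `∅` and is monotone on measurable sets. -/
def IsMonotoneMeasure [MeasurableSpace U] (ν : Set U → ENNReal) : Prop :=
  ν ∅ = 0 ∧ ∀ A B : Set U, MeasurableSet A → MeasurableSet B → A ⊆ B → ν A ≤ ν B

/-- The decomposition inequalities for the ordered pair `(μ, ν)` w.r.t. a family
`A : NNRat → Set U`, stated additively (no truncated subtraction):
`α(ν(S∩A_α) − ν(S∩A_β)) ≤ μ(S∩A_α) − μ(S∩A_β) ≤ β(ν(S∩A_α) − ν(S∩A_β))`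
for all measurable `S` of finite `μ`- and `ν`-measure and rationals `α < β`. -/
def DecompIneq [MeasurableSpace U] (μ ν : Set U → ENNReal) (A : NNRat → Set U) : Prop :=
  ∀ S : Set U, MeasurableSet S → μ S ≠ ⊤ → ν S ≠ ⊤ →
    ∀ α β : NNRat, α < β →
      (((α : ℝ≥0) : ENNReal) * ν (S ∩ A α) + μ (S ∩ A β)
          ≤ μ (S ∩ A α) + ((α : ℝ≥0) : ENNReal) * ν (S ∩ A β)) ∧
      (μ (S ∩ A α) + ((β : ℝ≥0) : ENNReal) * ν (S ∩ A β)
          ≤ ((β : ℝ≥0) : ENNReal) * ν (S ∩ A α) + μ (S ∩ A β))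

/-- The decomposition property: a decreasing family of measurable sets with `A 0 = univ`
satisfying the decomposition inequalities. -/
def DecompProp [MeasurableSpace U] (μ ν : Set U → ENNReal) (A : NNRat → Set U) : Prop :=
  (∀ α, MeasurableSet (A α)) ∧ A 0 = Set.univ ∧ Antitone A ∧ DecompIneq μ ν A

/-- Comonotonicity for `ℝ≥0∞`-valued functions. -/
def Comonotone (f g : U → ENNReal) : Prop :=
  ∀ s t : U, (f s ≤ f t ∧ g s ≤ g t) ∨ (f t ≤ f s ∧ g t ≤ g s)

theorem choquet_min_tendsto [MeasurableSpace U] (ν : Set U → ENNReal)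
    (hν : IsMonotoneMeasure ν) (f : U → ENNReal) (hf : Measurable f)
    (A : Set U) (hA : MeasurableSet A) :
    Tendsto (fun n : ℕ => Choquet ν (fun x => min (f x) (n : ENNReal)) A) atTop
      (nhds (Choquet ν f A)) := by
  unfold Choquet
  apply MeasureTheory.lintegral_tendsto_of_tendsto_of_monotone
  · intro n
    apply Measurable.aemeasurable
    apply Antitone.measurable
    intro s t hst
    refine hν.2 _ _ ((measurableSet_le measurable_const (hf.min measurable_const)).inter hA)
      ((measurableSet_le measurable_const (hf.min measurable_const)).inter hA) ?_
    exact Set.inter_subset_inter_left A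
      (fun x hx => le_trans (ENNReal.ofReal_le_ofReal hst) hx)
  · filter_upwards with t
    intro n m hnm
    refine hν.2 _ _ ((measurableSet_le measurable_const (hf.min measurable_const)).inter hA)
      ((measurableSet_le measurable_const (hf.min measurable_const)).inter hA) ?_
    refine Set.inter_subset_inter_left A (fun x hx => ?_)
    simp only [Set.mem_setOf_eq] at hx ⊢
    exact le_trans hx (min_le_min le_rfl (by exact_mod_cast hnm))
  · filter_upwards [MeasureTheory.self_mem_ae_restrict measurableSet_Ioi] with t ht
    apply tendsto_atTop_of_eventually_const (i₀ := ⌈t⌉₊)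
    intro n hn
    congr 1
    ext x
    simp only [Set.mem_inter_iff, Set.mem_setOf_eq, le_min_iff, and_assoc]
    refine ⟨fun h => ⟨h.1, h.2.2⟩, fun h => ⟨h.1, ?_, h.2⟩⟩
    calc ENNReal.ofReal t ≤ ENNReal.ofReal n := by
          exact ENNReal.ofReal_le_ofReal (le_trans (Nat.le_ceil t) (by exact_mod_cast hn))
      _ = (n : ENNReal) := by simp
end

section
/- If a monotone measure ν is null-continuous and weakly null-additive, and nonnegative measurable functions f, g satisfy ∫_A f dν = ∫_A g dν < ∞ for every measurable A, then ν({f ≠ g}) = 0. -/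
open MeasureTheory Filter Set
open scoped NNReal ENNReal NNRat

variable {U : Type*}

/-!
For `a < b`, a measurable set `A` on which `f ≤ a` and `b ≤ g` satisfies
`ν A * b ≤ ∫_A g dν = ∫_A f dν ≤ ν A * a`, and finiteness of the middle term forces `ν A = 0`.
Countably many such sets, with rational thresholds, cover `{f < g}`; weak null-additivity makes
their finite unions null and null-continuity passes to the increasing union. By symmetry
`{g < f}` is null too, and weak null-additivity once more gives `ν {f ≠ g} = 0`.
-/

def IsWeaklyNullAdditive [MeasurableSpace U] (ν : Set U → ENNReal) : Prop :=
  ∀ A B : Set U, MeasurableSet A → MeasurableSet B → ν A = 0 → ν B = 0 → ν (A ∪ B) = 0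

def IsNullContinuous [MeasurableSpace U] (ν : Set U → ENNReal) : Prop :=
  ∀ A : ℕ → Set U, (∀ n, MeasurableSet (A n)) → Monotone A → (∀ n, ν (A n) = 0) →
    ν (⋃ n, A n) = 0

section NullSets

variable [MeasurableSpace U] {ν : Set U → ENNReal}

theorem measurableSet_accumulate {ι : Type*} [LE ι] [Countable ι] {s : ι → Set U}
    (hs : ∀ i, MeasurableSet (s i)) (i : ι) : MeasurableSet (accumulate s i) :=
  .iUnion fun _ => .iUnion fun _ => hs _

theorem IsWeaklyNullAdditive.measure_accumulate_eq_zero (hwna : IsWeaklyNullAdditive ν)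
    {s : ℕ → Set U} (hs : ∀ n, MeasurableSet (s n)) (h0 : ∀ n, ν (s n) = 0) (n : ℕ) :
    ν (accumulate s n) = 0 := by
  induction n with
  | zero => simpa using h0 0
  | succ n ih =>
    rw [accumulate_succ]
    exact hwna _ _ (measurableSet_accumulate hs n) (hs _) ih (h0 _)

theorem measure_iUnion_eq_zero {ι : Type*} [Countable ι] (hν₀ : ν ∅ = 0)
    (hwna : IsWeaklyNullAdditive ν) (hnc : IsNullContinuous ν)
    {s : ι → Set U} (hs : ∀ i, MeasurableSet (s i)) (h0 : ∀ i, ν (s i) = 0) :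
    ν (⋃ i, s i) = 0 := by
  cases isEmpty_or_nonempty ι with
  | inl _ => simpa using hν₀
  | inr _ =>
    obtain ⟨e, he⟩ := exists_surjective_nat ι
    rw [← he.iUnion_comp, ← iUnion_accumulate]
    exact hnc _ (measurableSet_accumulate fun n => hs (e n)) monotone_accumulate
      (hwna.measure_accumulate_eq_zero (fun n => hs (e n)) fun n => h0 (e n))

end NullSets

theorem setLIntegral_Ioi_indicator_ofReal_le (c a : ℝ≥0∞) :
    ∫⁻ t in Ioi (0 : ℝ), {t | ENNReal.ofReal t ≤ a}.indicator (fun _ => c) t = c * a := by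
  have hmeas : MeasurableSet {t : ℝ | ENNReal.ofReal t ≤ a} :=
    measurableSet_le ENNReal.measurable_ofReal measurable_const
  rw [lintegral_indicator_const hmeas, Measure.restrict_apply hmeas, inter_comm]
  rcases eq_or_ne a ⊤ with rfl | ha
  · simp
  · have : Ioi (0 : ℝ) ∩ {t | ENNReal.ofReal t ≤ a} = Ioc 0 a.toReal := by
      ext t
      simp [ENNReal.ofReal_le_iff_le_toReal ha]
    rw [this, Real.volume_Ioc, sub_zero, ENNReal.ofReal_toReal ha]

section Choquet

variable [MeasurableSpace U] {ν : Set U → ENNReal} {f g : U → ENNReal} {A : Set U}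

theorem choquet_le_mul_of_le (hν : IsMonotoneMeasure ν) (hf : Measurable f)
    (hA : MeasurableSet A) {a : ℝ≥0∞} (hfa : ∀ x ∈ A, f x ≤ a) :
    Choquet ν f A ≤ ν A * a := by
  rw [← setLIntegral_Ioi_indicator_ofReal_le]
  refine setLIntegral_mono' measurableSet_Ioi fun t _ => ?_
  by_cases ht : ENNReal.ofReal t ≤ a
  · rw [indicator_of_mem (s := {t : ℝ | ENNReal.ofReal t ≤ a}) ht]
    exact hν.2 _ _ ((hf measurableSet_Ici).inter hA) hA inter_subset_right
  · have hempty : {x | ENNReal.ofReal t ≤ f x} ∩ A = ∅ :=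
      eq_empty_iff_forall_notMem.2 fun x hx => ht (hx.1.trans (hfa x hx.2))
    rw [hempty, hν.1]
    exact zero_le

theorem mul_le_choquet_of_le {b : ℝ≥0∞} (hgb : ∀ x ∈ A, b ≤ g x) :
    ν A * b ≤ Choquet ν g A := by
  rw [← setLIntegral_Ioi_indicator_ofReal_le]
  refine lintegral_mono fun t => ?_
  by_cases ht : ENNReal.ofReal t ≤ b
  · have hA : {x | ENNReal.ofReal t ≤ g x} ∩ A = A :=
      inter_eq_right.2 fun x hx => ht.trans (hgb x hx)
    rw [indicator_of_mem (s := {t : ℝ | ENNReal.ofReal t ≤ b}) ht, hA]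
  · rw [indicator_of_notMem (s := {t : ℝ | ENNReal.ofReal t ≤ b}) ht]
    exact zero_le

theorem measure_eq_zero_of_choquet_eq (hν : IsMonotoneMeasure ν) (hf : Measurable f)
    (hA : MeasurableSet A) {a b : ℝ≥0∞} (hab : a < b) (hfa : ∀ x ∈ A, f x ≤ a)
    (hgb : ∀ x ∈ A, b ≤ g x) (heq : Choquet ν f A = Choquet ν g A)
    (hfin : Choquet ν f A ≠ ⊤) : ν A = 0 := by
  have hb : ν A * b ≤ Choquet ν f A := heq ▸ mul_le_choquet_of_le hgb
  have hba : ν A * b ≤ ν A * a := hb.trans (choquet_le_mul_of_le hν hf hA hfa)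
  have hνA : ν A ≠ ⊤ := by
    rintro h
    rw [h, ENNReal.top_mul (pos_of_gt hab).ne'] at hb
    exact hfin (top_le_iff.1 hb)
  by_contra h0
  exact (ENNReal.mul_lt_mul_right h0 hνA hab).not_ge hba

end Choquet

theorem measure_setOf_lt_eq_zero_of_choquet_eq [MeasurableSpace U] {ν : Set U → ENNReal}
    (hν : IsMonotoneMeasure ν) (hwna : IsWeaklyNullAdditive ν) (hnc : IsNullContinuous ν)
    {f g : U → ENNReal} (hf : Measurable f) (hg : Measurable g)
    (heq : ∀ A, MeasurableSet A → Choquet ν f A = Choquet ν g A)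
    (hfin : ∀ A, MeasurableSet A → Choquet ν f A ≠ ⊤) :
    ν {x | f x < g x} = 0 := by
  let ι := {p : ℚ × ℚ // ENNReal.ofReal p.1 < ENNReal.ofReal p.2}
  let s : ι → Set U := fun p =>
    {x | f x ≤ ENNReal.ofReal p.1.1} ∩ {x | ENNReal.ofReal p.1.2 ≤ g x}
  have hs : ∀ p, MeasurableSet (s p) := fun p =>
    (hf measurableSet_Iic).inter (hg measurableSet_Ici)
  have hcover : {x | f x < g x} = ⋃ p, s p := by
    ext x
    simp only [mem_ofPred_eq, mem_iUnion]
    constructor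
    · intro hx
      obtain ⟨q, -, hfq, hqg⟩ := ENNReal.lt_iff_exists_rat_btwn.1 hx
      obtain ⟨r, -, hqr, hrg⟩ := ENNReal.lt_iff_exists_rat_btwn.1 hqg
      exact ⟨⟨(q, r), hqr⟩, hfq.le, hrg.le⟩
    · rintro ⟨p, hfp, hpg⟩
      exact hfp.trans_lt (p.2.trans_le hpg)
  rw [hcover]
  exact measure_iUnion_eq_zero hν.1 hwna hnc hs fun p =>
    measure_eq_zero_of_choquet_eq hν hf (hs p) p.2 (fun x hx => hx.1) (fun x hx => hx.2)
      (heq _ (hs p)) (hfin _ (hs p))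

theorem choquet_ae_unique [MeasurableSpace U] (ν : Set U → ENNReal)
    (hν : IsMonotoneMeasure ν)
    (hwna : ∀ A B : Set U, MeasurableSet A → MeasurableSet B →
      ν A = 0 → ν B = 0 → ν (A ∪ B) = 0)
    (hnc : ∀ A : ℕ → Set U, (∀ n, MeasurableSet (A n)) → Monotone A →
      (∀ n, ν (A n) = 0) → ν (⋃ n, A n) = 0)
    (f g : U → ENNReal) (hf : Measurable f) (hg : Measurable g)
    (heq : ∀ A : Set U, MeasurableSet A → Choquet ν f A = Choquet ν g A)
    (hfin : ∀ A : Set U, MeasurableSet A → Choquet ν f A ≠ ⊤) :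
    ν {x | f x ≠ g x} = 0 := by
  have hlt : ν {x | f x < g x} = 0 :=
    measure_setOf_lt_eq_zero_of_choquet_eq hν hwna hnc hf hg heq hfin
  have hgt : ν {x | g x < f x} = 0 :=
    measure_setOf_lt_eq_zero_of_choquet_eq hν hwna hnc hg hf (fun A hA => (heq A hA).symm)
      (fun A hA => heq A hA ▸ hfin A hA)
  have hsplit : {x | f x ≠ g x} = {x | f x < g x} ∪ {x | g x < f x} := by
    ext x
    exact ne_iff_lt_or_gt
  rw [hsplit]
  exact hwna _ _ (measurableSet_lt hf hg) (measurableSet_lt hg hf) hlt hgt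
end

section
/- Let μ, ν be finite monotone measures. If there exists a nonnegative measurable function f such that μ(A) = ∫_A f dν for all measurable A, then the family A_α = {f ≥ α} (α ∈ ℚ≥0) satisfies the decomposition property: for all A ∈ 𝒰 and rationals 0 ≤ α < β, α·(ν(A∩A_α) − ν(A∩A_β)) ≤ μ(A∩A_α) − μ(A∩A_β) ≤ β·(ν(A∩A_α) − ν(A∩A_β)). -/
open MeasureTheory Filter Set
open scoped NNReal ENNReal NNRat

variable {U : Type*}

/-!
Fix `A` and put `g t = ν ({f ≥ t} ∩ A)`, an antitone function of `t`. Intersecting with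
`{f ≥ c}` freezes the integrand of the Choquet integral at `g c` for `t ≤ c`, so
`μ (A ∩ {f ≥ c}) = c g(c) + ∫_{(c, ∞)} g`. Splitting `(α, ∞)` at `β`, the two decomposition
inequalities become `(β - α) g(β) ≤ ∫_{(α, β]} g ≤ (β - α) g(α)`, which hold because `g` is
antitone.
-/

section Choquet

variable [MeasurableSpace U] {ν : Set U → ℝ≥0∞} {f : U → ℝ≥0∞} {A : Set U}

theorem IsMonotoneMeasure.antitone_superlevel_inter (hν : IsMonotoneMeasure ν)
    (hf : Measurable f) (hA : MeasurableSet A) :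
    Antitone fun t : ℝ => ν ({x | ENNReal.ofReal t ≤ f x} ∩ A) := fun _ _ hst =>
  hν.2 _ _ ((hf measurableSet_Ici).inter hA) ((hf measurableSet_Ici).inter hA)
    (inter_subset_inter_left A fun _ hx => (ENNReal.ofReal_le_ofReal hst).trans hx)

theorem choquet_inter_superlevel (c : ℝ≥0) :
    Choquet ν f (A ∩ {x | (c : ℝ≥0∞) ≤ f x}) =
      c * ν (A ∩ {x | (c : ℝ≥0∞) ≤ f x}) +
        ∫⁻ t in Ioi (c : ℝ), ν ({x | ENNReal.ofReal t ≤ f x} ∩ A) := by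
  rw [Choquet, ← Ioc_union_Ioi_eq_Ioi c.coe_nonneg,
    lintegral_union measurableSet_Ioi (Ioc_disjoint_Ioi le_rfl)]
  congr 1
  · rw [setLIntegral_congr_fun measurableSet_Ioc (g := fun _ => ν (A ∩ {x | (c : ℝ≥0∞) ≤ f x})),
      setLIntegral_const, Real.volume_Ioc, sub_zero, ENNReal.ofReal_coe_nnreal, mul_comm]
    intro t ht
    have htc : ENNReal.ofReal t ≤ c := ENNReal.ofReal_coe_nnreal ▸ ENNReal.ofReal_le_ofReal ht.2
    exact congrArg ν (inter_eq_right.mpr (inter_subset_right.trans fun _ hx => htc.trans hx))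
  · refine setLIntegral_congr_fun measurableSet_Ioi fun t ht => congrArg ν ?_
    have hct : (c : ℝ≥0∞) ≤ ENNReal.ofReal t :=
      ENNReal.ofReal_coe_nnreal ▸ ENNReal.ofReal_le_ofReal ht.le
    rw [← inter_assoc, inter_eq_left]
    exact inter_subset_left.trans fun _ hx => hct.trans hx

end Choquet

section Antitone

variable {g : ℝ → ℝ≥0∞}

theorem Antitone.ofReal_sub_mul_le_setLIntegral_Ioc (hg : Antitone g) (a b : ℝ) :
    ENNReal.ofReal (b - a) * g b ≤ ∫⁻ t in Ioc a b, g t := by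
  rw [← Real.volume_Ioc, mul_comm, ← setLIntegral_const]
  exact setLIntegral_mono' measurableSet_Ioc fun _ ht => hg ht.2

theorem Antitone.setLIntegral_Ioc_le_ofReal_sub_mul (hg : Antitone g) (a b : ℝ) :
    ∫⁻ t in Ioc a b, g t ≤ ENNReal.ofReal (b - a) * g a := by
  rw [← Real.volume_Ioc, mul_comm, ← setLIntegral_const]
  exact setLIntegral_mono' measurableSet_Ioc fun _ ht => hg ht.1.le

theorem Antitone.decomp_ineq_mul_add_setLIntegral_Ioi (hg : Antitone g) {a b : ℝ≥0}
    (hab : a ≤ b) :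
    a * g a + (b * g b + ∫⁻ t in Ioi (b : ℝ), g t)
        ≤ (a * g a + ∫⁻ t in Ioi (a : ℝ), g t) + a * g b ∧
      (a * g a + ∫⁻ t in Ioi (a : ℝ), g t) + b * g b
        ≤ b * g a + (b * g b + ∫⁻ t in Ioi (b : ℝ), g t) := by
  have hab' : (a : ℝ) ≤ b := hab
  rw [← Ioc_union_Ioi_eq_Ioi hab', lintegral_union measurableSet_Ioi (Ioc_disjoint_Ioi le_rfl)]
  have hba : (b : ℝ≥0∞) = a + ENNReal.ofReal (b - a) := by
    rw [← ENNReal.ofReal_coe_nnreal (p := a), ← ENNReal.ofReal_coe_nnreal (p := b),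
      ← ENNReal.ofReal_add a.coe_nonneg (sub_nonneg.mpr hab'), add_sub_cancel]
  rw [hba]
  have hlow := hg.ofReal_sub_mul_le_setLIntegral_Ioc a b
  have hup := hg.setLIntegral_Ioc_le_ofReal_sub_mul a b
  constructor
  · calc _ = a * g a + (ENNReal.ofReal (b - a) * g b + ∫⁻ t in Ioi (b : ℝ), g t) + a * g b := by
          ring
      _ ≤ a * g a + ((∫⁻ t in Ioc (a : ℝ) b, g t) + ∫⁻ t in Ioi (b : ℝ), g t) + a * g b := by
          gcongr
      _ = _ := by ring
  · calc _ ≤ a * g a + (ENNReal.ofReal (b - a) * g a + ∫⁻ t in Ioi (b : ℝ), g t) +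
            (a + ENNReal.ofReal (b - a)) * g b := by gcongr
      _ = _ := by ring

end Antitone

theorem rn_implies_decomp_general [MeasurableSpace U] (μ ν : Set U → ENNReal)
    (hν : IsMonotoneMeasure ν)
    (f : U → ENNReal) (hf : Measurable f)
    (hRN : ∀ A : Set U, MeasurableSet A → μ A = Choquet ν f A) :
    ∀ A : Set U, MeasurableSet A → ∀ α β : NNRat, α < β →
      (((α : ℝ≥0) : ENNReal) * ν (A ∩ {x | ((α : ℝ≥0) : ENNReal) ≤ f x})
            + μ (A ∩ {x | ((β : ℝ≥0) : ENNReal) ≤ f x})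
          ≤ μ (A ∩ {x | ((α : ℝ≥0) : ENNReal) ≤ f x})
            + ((α : ℝ≥0) : ENNReal) * ν (A ∩ {x | ((β : ℝ≥0) : ENNReal) ≤ f x})) ∧
      (μ (A ∩ {x | ((α : ℝ≥0) : ENNReal) ≤ f x})
            + ((β : ℝ≥0) : ENNReal) * ν (A ∩ {x | ((β : ℝ≥0) : ENNReal) ≤ f x})
          ≤ ((β : ℝ≥0) : ENNReal) * ν (A ∩ {x | ((α : ℝ≥0) : ENNReal) ≤ f x})
            + μ (A ∩ {x | ((β : ℝ≥0) : ENNReal) ≤ f x})) := by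
  intro A hA α β hαβ
  have hμ_eq (c : ℝ≥0) : μ (A ∩ {x | (c : ℝ≥0∞) ≤ f x}) =
      c * ν (A ∩ {x | (c : ℝ≥0∞) ≤ f x}) +
        ∫⁻ t in Ioi (c : ℝ), ν ({x | ENNReal.ofReal t ≤ f x} ∩ A) := by
    rw [hRN _ (hA.inter (measurableSet_le measurable_const hf)), choquet_inter_superlevel]
  have hν_eq (c : ℝ≥0) : ν (A ∩ {x | (c : ℝ≥0∞) ≤ f x}) =
      ν ({x | ENNReal.ofReal c ≤ f x} ∩ A) := by
    rw [inter_comm, ENNReal.ofReal_coe_nnreal]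
  simp only [hμ_eq, hν_eq]
  exact (hν.antitone_superlevel_inter hf hA).decomp_ineq_mul_add_setLIntegral_Ioi
    (NNRat.cast_le.mpr hαβ.le)

theorem rn_implies_decomp [MeasurableSpace U] (μ ν : Set U → ENNReal)
    (hμ : IsMonotoneMeasure μ) (hν : IsMonotoneMeasure ν)
    (hμfin : μ Set.univ ≠ ⊤) (hνfin : ν Set.univ ≠ ⊤)
    (f : U → ENNReal) (hf : Measurable f)
    (hRN : ∀ A : Set U, MeasurableSet A → μ A = Choquet ν f A) :
    ∀ A : Set U, MeasurableSet A → ∀ α β : NNRat, α < β →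
      (((α : ℝ≥0) : ENNReal) * ν (A ∩ {x | ((α : ℝ≥0) : ENNReal) ≤ f x})
            + μ (A ∩ {x | ((β : ℝ≥0) : ENNReal) ≤ f x})
          ≤ μ (A ∩ {x | ((α : ℝ≥0) : ENNReal) ≤ f x})
            + ((α : ℝ≥0) : ENNReal) * ν (A ∩ {x | ((β : ℝ≥0) : ENNReal) ≤ f x})) ∧
      (μ (A ∩ {x | ((α : ℝ≥0) : ENNReal) ≤ f x})
            + ((β : ℝ≥0) : ENNReal) * ν (A ∩ {x | ((β : ℝ≥0) : ENNReal) ≤ f x})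
          ≤ ((β : ℝ≥0) : ENNReal) * ν (A ∩ {x | ((α : ℝ≥0) : ENNReal) ≤ f x})
            + μ (A ∩ {x | ((β : ℝ≥0) : ENNReal) ≤ f x})) :=
  rn_implies_decomp_general μ ν hν f hf hRN
end

section
/- Let μ, ν be finite monotone measures and suppose the pair (μ, ν) has the decomposition property with respect to a decreasing family {A_α}_{α ∈ ℚ≥0} with A_0 = U. If lim_{α→∞} max(μ(A_α), ν(A_α)) = 0, then lim_{α→∞} α·ν(A_α) = 0. -/
open MeasureTheory Filter Set
open scoped NNReal ENNReal NNRat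

variable {U : Type*}

/-! Letting `β → ∞` in the lower decomposition inequality on `univ`,
`α ν(A_α) + μ(A_β) ≤ μ(A_α) + α ν(A_β)`, gives `α ν(A_α) ≤ μ(A_α)`, and `μ(A_α) → 0`. -/

open Topology

theorem DecompIneq.coe_mul_le_of_tendsto_zero [MeasurableSpace U] {μ ν : Set U → ℝ≥0∞}
    {A : ℚ≥0 → Set U} (hd : DecompIneq μ ν A) {S : Set U} (hS : MeasurableSet S)
    (hμS : μ S ≠ ⊤) (hνS : ν S ≠ ⊤) (hν : Tendsto (fun β => ν (S ∩ A β)) atTop (𝓝 0))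
    (α : ℚ≥0) : ((α : ℝ≥0) : ℝ≥0∞) * ν (S ∩ A α) ≤ μ (S ∩ A α) := by
  have hlim : Tendsto (fun β => μ (S ∩ A α) + ((α : ℝ≥0) : ℝ≥0∞) * ν (S ∩ A β)) atTop
      (𝓝 (μ (S ∩ A α))) := by
    simpa using (ENNReal.Tendsto.const_mul hν (.inr ENNReal.coe_ne_top)).const_add (μ (S ∩ A α))
  refine ge_of_tendsto hlim ?_
  filter_upwards [eventually_gt_atTop α] with β hαβ
  exact le_self_add.trans (hd S hS hμS hνS α β hαβ).1

theorem alpha_mul_nu_tendsto_zero_general [MeasurableSpace U] (μ ν : Set U → ENNReal)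
    (hμfin : μ Set.univ ≠ ⊤) (hνfin : ν Set.univ ≠ ⊤)
    (A : NNRat → Set U) (hd : DecompProp μ ν A)
    (ht : Tendsto (fun α : NNRat => max (μ (A α)) (ν (A α))) atTop (nhds 0)) :
    Tendsto (fun α : NNRat => ((α : ℝ≥0) : ENNReal) * ν (A α)) atTop (nhds 0) := by
  have hμ : Tendsto (fun α => μ (A α)) atTop (𝓝 0) :=
    tendsto_nhds_bot_mono' ht fun _ => le_max_left _ _
  have hν : Tendsto (fun α => ν (univ ∩ A α)) atTop (𝓝 0) := by
    simpa using tendsto_nhds_bot_mono' ht fun _ => le_max_right _ _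
  refine tendsto_nhds_bot_mono' hμ fun α => ?_
  simpa using hd.2.2.2.coe_mul_le_of_tendsto_zero .univ hμfin hνfin hν α

theorem alpha_mul_nu_tendsto_zero [MeasurableSpace U] (μ ν : Set U → ENNReal)
    (hμ : IsMonotoneMeasure μ) (hν : IsMonotoneMeasure ν)
    (hμfin : μ Set.univ ≠ ⊤) (hνfin : ν Set.univ ≠ ⊤)
    (A : NNRat → Set U) (hd : DecompProp μ ν A)
    (ht : Tendsto (fun α : NNRat => max (μ (A α)) (ν (A α))) atTop (nhds 0)) :
    Tendsto (fun α : NNRat => ((α : ℝ≥0) : ENNReal) * ν (A α)) atTop (nhds 0) :=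
  alpha_mul_nu_tendsto_zero_general μ ν hμfin hνfin A hd ht
end

section
/- Let μ, ν be finite monotone measures such that (μ, ν) has the decomposition property with respect to {A_α}_{α∈ℚ≥0} and lim_{α→∞} max(μ(A_α), ν(A_α)) = 0. Define f(x) = sup{α ∈ ℚ≥0 : x ∈ A_α}. Then f is measurable and μ(A) = ∫_A f dν for every measurable A. -/
open MeasureTheory Filter Set
open scoped NNReal ENNReal NNRat

variable {U : Type*}

open scoped Topology

/-!
Cut `(0, ∞)` into the intervals `(iδ, (i+1)δ]`, `δ` rational, and put `aᵢ = ν (S ∩ A (iδ))`,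
`Gᵢ = μ (S ∩ A (iδ))`. On the `i`-th interval the level set `{f ≥ t}` lies between `A ((i+1)δ)`
and `A (iδ)`, so the Choquet integral lies between `δ ∑ aᵢ₊₁` and `δ ∑ aᵢ`. Summing the
decomposition inequalities `iδ (aᵢ - aᵢ₊₁) ≤ Gᵢ - Gᵢ₊₁ ≤ (i+1)δ (aᵢ - aᵢ₊₁)` by parts puts
`μ S = G₀` between the same two bounds: in the lower one the boundary term `mδ aₘ` is absorbed by
`Gₘ` through the Markov-type bound `α ν (S ∩ A α) ≤ μ (S ∩ A α)`, in the upper one it is dropped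
and `Gₘ → 0`. The bounds differ by `δ a₀ ≤ δ ν univ`, and `δ → 0`.
-/

noncomputable def supIndicator (A : ℚ≥0 → Set U) (x : U) : ℝ≥0∞ :=
  ⨆ q : ℚ≥0, (A q).indicator (fun _ => ((q : ℝ≥0) : ℝ≥0∞)) x

section SupIndicator

variable {A : ℚ≥0 → Set U}

theorem measurable_supIndicator [MeasurableSpace U] (hA : ∀ q, MeasurableSet (A q)) :
    Measurable (supIndicator A) :=
  Measurable.iSup fun q => measurable_const.indicator (hA q)

theorem coe_le_supIndicator {q : ℚ≥0} {x : U} (hx : x ∈ A q) :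
    ((q : ℝ≥0) : ℝ≥0∞) ≤ supIndicator A x :=
  le_iSup_of_le q (by rw [indicator_of_mem hx])

theorem mem_of_coe_lt_supIndicator (hA : Antitone A) {p : ℚ≥0} {x : U}
    (h : ((p : ℝ≥0) : ℝ≥0∞) < supIndicator A x) : x ∈ A p := by
  obtain ⟨q, hq⟩ := lt_iSup_iff.mp h
  by_cases hx : x ∈ A q
  · rw [indicator_of_mem hx] at hq
    exact hA (by exact_mod_cast hq.le) hx
  · simp [indicator_of_notMem hx] at hq

theorem subset_setOf_ofReal_le_supIndicator {q : ℚ≥0} {t : ℝ} (ht : t ≤ ((q : ℝ≥0) : ℝ)) :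
    A q ⊆ {x | ENNReal.ofReal t ≤ supIndicator A x} := fun _ hx =>
  (ENNReal.ofReal_le_of_le_toReal ht).trans (coe_le_supIndicator hx)

theorem setOf_ofReal_le_supIndicator_subset (hA : Antitone A) {p : ℚ≥0} {t : ℝ}
    (ht : ((p : ℝ≥0) : ℝ) < t) : {x | ENNReal.ofReal t ≤ supIndicator A x} ⊆ A p := fun _ hx =>
  mem_of_coe_lt_supIndicator hA ((ENNReal.coe_lt_ofReal.mpr ht).trans_le hx)

end SupIndicator

section Telescoping

variable {a G : ℕ → ℝ≥0∞} {c : ℕ → ℝ≥0} {δ : ℝ≥0}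

-- Summation by parts of `cᵢ (aᵢ - aᵢ₊₁) ≤ Gᵢ - Gᵢ₊₁`, kept free of the truncated subtraction
-- of `ℝ≥0∞`.

theorem mul_sum_range_succ_add_le (hc : ∀ i, c (i + 1) = c i + δ) (ha : ∀ i, a i ≠ ∞)
    (hG : ∀ i, G i ≠ ∞) (hstep : ∀ i, c i * a i + G (i + 1) ≤ G i + c i * a (i + 1)) (m : ℕ) :
    δ * ∑ i ∈ Finset.range m, a (i + 1) + G m ≤ G 0 + c m * a m := by
  induction m with
  | zero => simp
  | succ m ih =>
    have hfin : G m + c m * a m ≠ ∞ := by have := hG m; have := ha m; finiteness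
    have h : δ * ∑ i ∈ Finset.range m, a (i + 1) + G (m + 1) ≤ G 0 + c m * a (m + 1) := by
      rw [← ENNReal.add_le_add_iff_right hfin]
      calc δ * ∑ i ∈ Finset.range m, a (i + 1) + G (m + 1) + (G m + c m * a m)
          = (δ * ∑ i ∈ Finset.range m, a (i + 1) + G m) + (c m * a m + G (m + 1)) := by ring
        _ ≤ (G 0 + c m * a m) + (G m + c m * a (m + 1)) := add_le_add ih (hstep m)
        _ = G 0 + c m * a (m + 1) + (G m + c m * a m) := by ring
    calc δ * ∑ i ∈ Finset.range (m + 1), a (i + 1) + G (m + 1)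
        = δ * ∑ i ∈ Finset.range m, a (i + 1) + G (m + 1) + δ * a (m + 1) := by
          rw [Finset.sum_range_succ]; ring
      _ ≤ G 0 + c m * a (m + 1) + δ * a (m + 1) := by gcongr
      _ = G 0 + c (m + 1) * a (m + 1) := by rw [hc]; push_cast; ring

theorem le_mul_sum_range_add (hc0 : c 0 = 0) (hc : ∀ i, c (i + 1) = c i + δ)
    (ha : ∀ i, a i ≠ ∞) (hG : ∀ i, G i ≠ ∞)
    (hstep : ∀ i, G i + c (i + 1) * a (i + 1) ≤ c (i + 1) * a i + G (i + 1)) (m : ℕ) :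
    G 0 + c m * a m ≤ δ * ∑ i ∈ Finset.range m, a i + G m := by
  induction m with
  | zero => simp [hc0]
  | succ m ih =>
    have hfin : c m * a m + G m ≠ ∞ := by have := hG m; have := ha m; finiteness
    rw [← ENNReal.add_le_add_iff_right hfin]
    calc G 0 + c (m + 1) * a (m + 1) + (c m * a m + G m)
        = (G 0 + c m * a m) + (G m + c (m + 1) * a (m + 1)) := by ring
      _ ≤ (δ * ∑ i ∈ Finset.range m, a i + G m) + (c (m + 1) * a m + G (m + 1)) :=
          add_le_add ih (hstep m)
      _ = δ * ∑ i ∈ Finset.range (m + 1), a i + G (m + 1) + (c m * a m + G m) := by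
          rw [Finset.sum_range_succ, hc]; push_cast; ring

theorem mul_tsum_succ_le (hc : ∀ i, c (i + 1) = c i + δ) (ha : ∀ i, a i ≠ ∞)
    (hG : ∀ i, G i ≠ ∞) (hstep : ∀ i, c i * a i + G (i + 1) ≤ G i + c i * a (i + 1))
    (hmarkov : ∀ i, c i * a i ≤ G i) : δ * ∑' i, a (i + 1) ≤ G 0 := by
  rw [← ENNReal.tsum_mul_left]
  refine ENNReal.tsum_le_of_sum_range_le fun m => ?_
  rw [← Finset.mul_sum, ← ENNReal.add_le_add_iff_right (hG m)]
  calc δ * ∑ i ∈ Finset.range m, a (i + 1) + G m ≤ G 0 + c m * a m :=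
        mul_sum_range_succ_add_le hc ha hG hstep m
    _ ≤ G 0 + G m := by gcongr; exact hmarkov m

theorem le_mul_tsum (hc0 : c 0 = 0) (hc : ∀ i, c (i + 1) = c i + δ) (ha : ∀ i, a i ≠ ∞)
    (hG : ∀ i, G i ≠ ∞) (hstep : ∀ i, G i + c (i + 1) * a (i + 1) ≤ c (i + 1) * a i + G (i + 1))
    (hlim : Tendsto G atTop (𝓝 0)) : G 0 ≤ δ * ∑' i, a i := by
  have hbound : ∀ m, G 0 ≤ δ * ∑' i, a i + G m := fun m => calc
    G 0 ≤ G 0 + c m * a m := le_self_add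
    _ ≤ δ * ∑ i ∈ Finset.range m, a i + G m := le_mul_sum_range_add hc0 hc ha hG hstep m
    _ ≤ δ * ∑' i, a i + G m := by gcongr; exact ENNReal.sum_le_tsum _
  exact ge_of_tendsto (by simpa using tendsto_const_nhds.add hlim) (Eventually.of_forall hbound)

end Telescoping

section Partition

variable {H : ℝ → ℝ≥0∞} {δ : ℝ≥0}

theorem lintegral_Ioi_zero_eq_tsum_Ioc (hδ : 0 < δ) :
    ∫⁻ t in Ioi 0, H t = ∑' i : ℕ, ∫⁻ t in Ioc (i * (δ : ℝ)) ((i + 1) * δ), H t := by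
  have hmono : Monotone fun i : ℕ => (i : ℝ) * δ := fun _ _ hij =>
    mul_le_mul_of_nonneg_right (Nat.cast_le.mpr hij) δ.coe_nonneg
  have hunbdd : ¬BddAbove (range fun i : ℕ => (i : ℝ) * δ) :=
    not_bddAbove_iff.mpr fun x => by
      obtain ⟨i, hi⟩ := exists_nat_gt (x / δ)
      exact ⟨_, ⟨i, rfl⟩, by rwa [div_lt_iff₀ (by exact_mod_cast hδ)] at hi⟩
  have hunion := iUnion_Ioc_map_succ_eq_Ioi (fun i => hmono (Nat.zero_le i)) hunbdd
  simp only [Order.succ_eq_add_one, Nat.cast_add, Nat.cast_one, Nat.bot_eq_zero, Nat.cast_zero,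
    zero_mul] at hunion
  rw [← hunion, lintegral_iUnion (fun _ => measurableSet_Ioc)]
  simpa using hmono.pairwise_disjoint_on_Ioc_succ

theorem volume_Ioc_natCast_mul (i : ℕ) (δ : ℝ≥0) :
    volume (Ioc (i * (δ : ℝ)) ((i + 1) * δ)) = δ := by
  rw [Real.volume_Ioc, ← ENNReal.ofReal_coe_nnreal]
  congr 1
  ring

theorem lintegral_Ioi_zero_le_mul_tsum (hδ : 0 < δ) {b : ℕ → ℝ≥0∞}
    (hb : ∀ i : ℕ, ∀ t ∈ Ioc (i * (δ : ℝ)) ((i + 1) * δ), H t ≤ b i) :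
    ∫⁻ t in Ioi 0, H t ≤ δ * ∑' i, b i := by
  rw [lintegral_Ioi_zero_eq_tsum_Ioc hδ, ← ENNReal.tsum_mul_left]
  refine ENNReal.tsum_le_tsum fun i => ?_
  calc ∫⁻ t in Ioc (i * (δ : ℝ)) ((i + 1) * δ), H t
      ≤ ∫⁻ _ in Ioc (i * (δ : ℝ)) ((i + 1) * δ), b i := setLIntegral_mono' measurableSet_Ioc (hb i)
    _ = δ * b i := by rw [setLIntegral_const, volume_Ioc_natCast_mul, mul_comm]

theorem mul_tsum_le_lintegral_Ioi_zero (hδ : 0 < δ) {b : ℕ → ℝ≥0∞}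
    (hb : ∀ i : ℕ, ∀ t ∈ Ioc (i * (δ : ℝ)) ((i + 1) * δ), b i ≤ H t) :
    δ * ∑' i, b i ≤ ∫⁻ t in Ioi 0, H t := by
  rw [lintegral_Ioi_zero_eq_tsum_Ioc hδ, ← ENNReal.tsum_mul_left]
  refine ENNReal.tsum_le_tsum fun i => ?_
  calc δ * b i = ∫⁻ _ in Ioc (i * (δ : ℝ)) ((i + 1) * δ), b i := by
        rw [setLIntegral_const, volume_Ioc_natCast_mul, mul_comm]
    _ ≤ ∫⁻ t in Ioc (i * (δ : ℝ)) ((i + 1) * δ), H t := setLIntegral_mono' measurableSet_Ioc (hb i)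

end Partition

theorem le_of_forall_nnrat_pos_le_add_mul {a b C : ℝ≥0∞} (hC : C ≠ ∞)
    (h : ∀ δ : ℚ≥0, 0 < δ → a ≤ b + (δ : ℝ≥0) * C) : a ≤ b := by
  have hlim : Tendsto (fun n : ℕ => b + (n : ℝ≥0∞)⁻¹ * C) atTop (𝓝 b) := by
    simpa using tendsto_const_nhds.add
      (ENNReal.Tendsto.mul_const ENNReal.tendsto_inv_nat_nhds_zero (Or.inr hC))
  refine ge_of_tendsto hlim ?_
  filter_upwards [eventually_gt_atTop 0] with n hn
  have hcast : (((n : ℚ≥0)⁻¹ : ℚ≥0) : ℝ≥0) = ((n : ℝ≥0∞)⁻¹ : ℝ≥0∞) := by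
    rw [NNRat.cast_inv, NNRat.cast_natCast, ENNReal.coe_inv (by exact_mod_cast hn.ne'),
      ENNReal.coe_natCast]
  simpa only [hcast] using h (n : ℚ≥0)⁻¹ (inv_pos.mpr (Nat.cast_pos.mpr hn))

section Decomposition

variable [MeasurableSpace U] {μ ν : Set U → ℝ≥0∞} {A : ℚ≥0 → Set U} {S : Set U}

theorem IsMonotoneMeasure.ne_top (hν : IsMonotoneMeasure ν) (hνfin : ν univ ≠ ∞)
    (hS : MeasurableSet S) : ν S ≠ ∞ :=
  ne_top_of_le_ne_top hνfin (hν.2 _ _ hS MeasurableSet.univ (subset_univ S))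

theorem choquet_supIndicator_le_mul_tsum (hν : IsMonotoneMeasure ν)
    (hA : ∀ q, MeasurableSet (A q)) (hanti : Antitone A) (hS : MeasurableSet S) {δ : ℚ≥0}
    (hδ : 0 < δ) :
    Choquet ν (supIndicator A) S ≤ (δ : ℝ≥0) * ∑' i : ℕ, ν (S ∩ A (i * δ)) :=
  lintegral_Ioi_zero_le_mul_tsum (by exact_mod_cast hδ) fun i t ht =>
    hν.2 _ _ ((measurableSet_le measurable_const (measurable_supIndicator hA)).inter hS)
      (hS.inter (hA _)) <| by
        rw [inter_comm]
        exact inter_subset_inter_right S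
          (setOf_ofReal_le_supIndicator_subset hanti (by push_cast; exact ht.1))

theorem mul_tsum_le_choquet_supIndicator (hν : IsMonotoneMeasure ν)
    (hA : ∀ q, MeasurableSet (A q)) (hS : MeasurableSet S) {δ : ℚ≥0} (hδ : 0 < δ) :
    (δ : ℝ≥0) * ∑' i : ℕ, ν (S ∩ A ((i + 1 : ℕ) * δ)) ≤ Choquet ν (supIndicator A) S :=
  mul_tsum_le_lintegral_Ioi_zero (by exact_mod_cast hδ) fun i t ht =>
    hν.2 _ _ (hS.inter (hA _))
      ((measurableSet_le measurable_const (measurable_supIndicator hA)).inter hS) <| by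
        rw [inter_comm]
        exact inter_subset_inter_left S
          (subset_setOf_ofReal_le_supIndicator (by push_cast; exact ht.2))

theorem coe_mul_le_of_decompIneq (hν : IsMonotoneMeasure ν) (hA : ∀ q, MeasurableSet (A q))
    (hdec : DecompIneq μ ν A) (hν0 : Tendsto (fun β => ν (A β)) atTop (𝓝 0))
    (hS : MeasurableSet S) (hμS : μ S ≠ ∞) (hνS : ν S ≠ ∞) (α : ℚ≥0) :
    ((α : ℝ≥0) : ℝ≥0∞) * ν (S ∩ A α) ≤ μ (S ∩ A α) := by
  have hlim : Tendsto (fun β => μ (S ∩ A α) + (α : ℝ≥0) * ν (A β)) atTop (𝓝 (μ (S ∩ A α))) := by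
    simpa using tendsto_const_nhds.add (ENNReal.Tendsto.const_mul hν0 (Or.inr ENNReal.coe_ne_top))
  refine ge_of_tendsto hlim ?_
  filter_upwards [eventually_gt_atTop α] with β hβ
  calc ((α : ℝ≥0) : ℝ≥0∞) * ν (S ∩ A α) ≤ (α : ℝ≥0) * ν (S ∩ A α) + μ (S ∩ A β) := le_self_add
    _ ≤ μ (S ∩ A α) + (α : ℝ≥0) * ν (S ∩ A β) := (hdec S hS hμS hνS α β hβ).1
    _ ≤ μ (S ∩ A α) + (α : ℝ≥0) * ν (A β) := by
        gcongr
        exact hν.2 _ _ (hS.inter (hA β)) (hA β) inter_subset_right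

theorem le_choquet_add_and_choquet_le_add (hμ : IsMonotoneMeasure μ) (hν : IsMonotoneMeasure ν)
    (hμfin : μ univ ≠ ∞) (hνfin : ν univ ≠ ∞) (hd : DecompProp μ ν A)
    (hμ0 : Tendsto (fun β => μ (A β)) atTop (𝓝 0)) (hν0 : Tendsto (fun β => ν (A β)) atTop (𝓝 0))
    (hS : MeasurableSet S) {δ : ℚ≥0} (hδ : 0 < δ) :
    μ S ≤ Choquet ν (supIndicator A) S + (δ : ℝ≥0) * ν univ ∧
      Choquet ν (supIndicator A) S ≤ μ S + (δ : ℝ≥0) * ν univ := by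
  obtain ⟨hA, hA0, hanti, hdec⟩ := hd
  set a : ℕ → ℝ≥0∞ := fun i => ν (S ∩ A (i * δ))
  set G : ℕ → ℝ≥0∞ := fun i => μ (S ∩ A (i * δ))
  set c : ℕ → ℝ≥0 := fun i => ((i * δ : ℚ≥0) : ℝ≥0)
  have ha (i : ℕ) : a i ≠ ∞ := hν.ne_top hνfin (hS.inter (hA _))
  have hG (i : ℕ) : G i ≠ ∞ := hμ.ne_top hμfin (hS.inter (hA _))
  have hc0 : c 0 = 0 := by simp [c]
  have hc (i : ℕ) : c (i + 1) = c i + δ := by simp only [c]; push_cast; ring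
  have hμS := hμ.ne_top hμfin hS
  have hνS := hν.ne_top hνfin hS
  have hstep (i : ℕ) := hdec S hS hμS hνS (i * δ) ((i + 1 : ℕ) * δ)
    (by gcongr; exact_mod_cast i.lt_succ_self)
  have hmarkov (i : ℕ) : c i * a i ≤ G i := coe_mul_le_of_decompIneq hν hA hdec hν0 hS hμS hνS _
  have hGlim : Tendsto G atTop (𝓝 0) :=
    tendsto_of_tendsto_of_tendsto_of_le_of_le tendsto_const_nhds
      (hμ0.comp (tendsto_natCast_atTop_atTop.atTop_mul_const hδ)) (fun _ => zero_le)
      fun i => hμ.2 _ _ (hS.inter (hA _)) (hA _) inter_subset_right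
  have hG0 : G 0 = μ S := by simp [G, hA0]
  have hlow : (δ : ℝ≥0) * ∑' i, a (i + 1) ≤ μ S :=
    hG0 ▸ mul_tsum_succ_le hc ha hG (fun i => (hstep i).1) hmarkov
  have hup : μ S ≤ (δ : ℝ≥0) * ∑' i, a i :=
    hG0 ▸ le_mul_tsum hc0 hc ha hG (fun i => (hstep i).2) hGlim
  have hsplit : (δ : ℝ≥0) * ∑' i, a i = (δ : ℝ≥0) * a 0 + (δ : ℝ≥0) * ∑' i, a (i + 1) := by
    rw [tsum_eq_zero_add' ENNReal.summable, mul_add]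
  have ha0 : (δ : ℝ≥0) * a 0 ≤ (δ : ℝ≥0) * ν univ := by
    gcongr
    exact hν.2 _ _ (hS.inter (hA _)) MeasurableSet.univ (subset_univ _)
  have hCl := mul_tsum_le_choquet_supIndicator hν hA hS hδ
  have hCu := choquet_supIndicator_le_mul_tsum hν hA hanti hS hδ
  constructor
  · calc μ S ≤ (δ : ℝ≥0) * a 0 + (δ : ℝ≥0) * ∑' i, a (i + 1) := hsplit ▸ hup
      _ ≤ Choquet ν (supIndicator A) S + (δ : ℝ≥0) * ν univ := by
        rw [add_comm]; exact add_le_add hCl ha0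
  · calc Choquet ν (supIndicator A) S ≤ (δ : ℝ≥0) * a 0 + (δ : ℝ≥0) * ∑' i, a (i + 1) :=
          hsplit ▸ hCu
      _ ≤ μ S + (δ : ℝ≥0) * ν univ := by
        rw [add_comm]; exact add_le_add hlow ha0

end Decomposition

theorem decomp_implies_rn [MeasurableSpace U] (μ ν : Set U → ENNReal)
    (hμ : IsMonotoneMeasure μ) (hν : IsMonotoneMeasure ν)
    (hμfin : μ Set.univ ≠ ⊤) (hνfin : ν Set.univ ≠ ⊤)
    (A : NNRat → Set U) (hd : DecompProp μ ν A)
    (ht : Tendsto (fun α : NNRat => max (μ (A α)) (ν (A α))) atTop (nhds 0)) :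
    Measurable (fun x => ⨆ q : NNRat, (A q).indicator (fun _ => ((q : ℝ≥0) : ENNReal)) x) ∧
    ∀ S : Set U, MeasurableSet S →
      μ S = Choquet ν
        (fun x => ⨆ q : NNRat, (A q).indicator (fun _ => ((q : ℝ≥0) : ENNReal)) x) S := by
  have hμ0 : Tendsto (fun α => μ (A α)) atTop (𝓝 0) :=
    tendsto_of_tendsto_of_tendsto_of_le_of_le tendsto_const_nhds ht (fun _ => zero_le)
      fun _ => le_max_left _ _
  have hν0 : Tendsto (fun α => ν (A α)) atTop (𝓝 0) :=
    tendsto_of_tendsto_of_tendsto_of_le_of_le tendsto_const_nhds ht (fun _ => zero_le)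
      fun _ => le_max_right _ _
  refine ⟨measurable_supIndicator hd.1, fun S hS => le_antisymm ?_ ?_⟩
  · exact le_of_forall_nnrat_pos_le_add_mul hνfin fun δ hδ =>
      (le_choquet_add_and_choquet_le_add hμ hν hμfin hνfin hd hμ0 hν0 hS hδ).1
  · exact le_of_forall_nnrat_pos_le_add_mul hνfin fun δ hδ =>
      (le_choquet_add_and_choquet_le_add hμ hν hμfin hνfin hd hμ0 hν0 hS hδ).2
end

section
/- Let μ, ν be finite monotone measures such that (μ,ν) has the decomposition property w.r.t. {A_α}_{α∈ℚ≥0} with lim_{α→∞} max(μ(A_α), ν(A_α)) = 0. Then μ is absolutely continuous with respect to ν: ν(A) = 0 implies μ(A) = 0 for all measurable A. -/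
open MeasureTheory Filter Set
open scoped NNReal ENNReal NNRat

variable {U : Type*}

/-! Taking `α = 0` in the upper decomposition inequality, where `A 0 = univ`, gives
`μ(S) + β ν(S ∩ A_β) ≤ β ν(S) + μ(S ∩ A_β)`. For a `ν`-null set `S` both `ν`-terms vanish, so
`μ(S) ≤ μ(S ∩ A_β) ≤ μ(A_β)` for every `β > 0`, and the right side tends to `0`. -/

section

variable [MeasurableSpace U] {μ ν : Set U → ENNReal}

theorem IsMonotoneMeasure.mono (hμ : IsMonotoneMeasure μ) {S T : Set U} (hS : MeasurableSet S)
    (hT : MeasurableSet T) (hST : S ⊆ T) : μ S ≤ μ T :=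
  hμ.2 S T hS hT hST

theorem IsMonotoneMeasure.ne_top_s8 (hμ : IsMonotoneMeasure μ) (hμfin : μ univ ≠ ⊤) {S : Set U}
    (hS : MeasurableSet S) : μ S ≠ ⊤ :=
  ne_top_of_le_ne_top hμfin (hμ.mono hS MeasurableSet.univ (subset_univ S))

theorem IsMonotoneMeasure.inter_eq_zero (hν : IsMonotoneMeasure ν) {S T : Set U}
    (hS : MeasurableSet S) (hT : MeasurableSet T) (hνS : ν S = 0) : ν (S ∩ T) = 0 :=
  nonpos_iff_eq_zero.mp (hνS ▸ hν.mono (hS.inter hT) hS inter_subset_left)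

theorem DecompProp.le_apply_of_null {A : NNRat → Set U} (hd : DecompProp μ ν A)
    (hμ : IsMonotoneMeasure μ) (hν : IsMonotoneMeasure ν) {S : Set U} (hS : MeasurableSet S)
    (hμS : μ S ≠ ⊤) (hνS : ν S = 0) {β : NNRat} (hβ : 0 < β) : μ S ≤ μ (A β) := by
  obtain ⟨hAmeas, hA0, -, hineq⟩ := hd
  have hupper := (hineq S hS hμS (hνS ▸ ENNReal.zero_ne_top) 0 β hβ).2
  rw [hA0, inter_univ, hνS, hν.inter_eq_zero hS (hAmeas β) hνS] at hupper
  simp only [mul_zero, add_zero, zero_add] at hupper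
  exact hupper.trans (hμ.mono (hS.inter (hAmeas β)) (hAmeas β) inter_subset_right)

end

theorem decomp_implies_abs_continuous_general [MeasurableSpace U] (μ ν : Set U → ENNReal)
    (hμ : IsMonotoneMeasure μ) (hν : IsMonotoneMeasure ν)
    (hμfin : μ Set.univ ≠ ⊤)
    (A : NNRat → Set U) (hd : DecompProp μ ν A)
    (ht : Tendsto (fun α : NNRat => max (μ (A α)) (ν (A α))) atTop (nhds 0)) :
    ∀ S : Set U, MeasurableSet S → ν S = 0 → μ S = 0 := by
  intro S hS hνS
  refine nonpos_iff_eq_zero.mp (ge_of_tendsto ht ?_)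
  filter_upwards [eventually_ge_atTop (1 : NNRat)] with β hβ
  calc μ S ≤ μ (A β) :=
        hd.le_apply_of_null hμ hν hS (hμ.ne_top_s8 hμfin hS) hνS (one_pos.trans_le hβ)
    _ ≤ max (μ (A β)) (ν (A β)) := le_max_left _ _

theorem decomp_implies_abs_continuous [MeasurableSpace U] (μ ν : Set U → ENNReal)
    (hμ : IsMonotoneMeasure μ) (hν : IsMonotoneMeasure ν)
    (hμfin : μ Set.univ ≠ ⊤) (hνfin : ν Set.univ ≠ ⊤)
    (A : NNRat → Set U) (hd : DecompProp μ ν A)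
    (ht : Tendsto (fun α : NNRat => max (μ (A α)) (ν (A α))) atTop (nhds 0)) :
    ∀ S : Set U, MeasurableSet S → ν S = 0 → μ S = 0 :=
  decomp_implies_abs_continuous_general μ ν hμ hν hμfin A hd ht
end

section
/- Let μ, ν be finite monotone measures. If there exists a nonnegative measurable f with μ(A) = ∫_A f dν (Choquet integral) for all measurable A, then μ is strongly absolutely continuous w.r.t. ν: for every ε > 0 there is δ > 0 such that ν(A) < δ implies μ(A) < ε. -/
/-!
Cutting the Choquet integral at height `n` gives `μ(A) ≤ n ν(A) + ∫ₙ^∞ ν({f ≥ t}) dt`. The tail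
does not depend on `A` and tends to `0` because `∫₀^∞ ν({f ≥ t}) dt = μ(U)` is finite, so one first
makes the tail smaller than `ε/2` and then takes `δ = ε/(2n)`.
-/

open MeasureTheory Filter Set
open scoped NNReal ENNReal NNRat

variable {U : Type*}

open Topology

theorem tendsto_setLIntegral_Ioi_natCast_zero {ρ : Measure ℝ} {g : ℝ → ℝ≥0∞} {a : ℝ}
    (hg : ∫⁻ t in Ioi a, g t ∂ρ ≠ ∞) :
    Tendsto (fun n : ℕ => ∫⁻ t in Ioi (n : ℝ), g t ∂ρ) atTop (𝓝 0) := by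
  have hempty : ⋂ n : ℕ, Ioi (n : ℝ) = ∅ :=
    eq_empty_of_forall_notMem fun t ht =>
      let ⟨n, hn⟩ := exists_nat_ge t
      (mem_iInter.1 ht n).not_ge hn
  obtain ⟨m, hm⟩ := exists_nat_ge a
  have hfinite : ρ.withDensity g (Ioi (m : ℝ)) ≠ ∞ := by
    rw [withDensity_apply _ measurableSet_Ioi]
    exact ne_top_of_le_ne_top hg (lintegral_mono_set (Ioi_subset_Ioi hm))
  -- continuity from above of the measure `ρ.withDensity g` along the sets `Ioi n`
  have hcont := tendsto_measure_iInter_atTop (μ := ρ.withDensity g)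
    (fun n : ℕ => measurableSet_Ioi.nullMeasurableSet)
    (fun _ _ hmn => Ioi_subset_Ioi (Nat.cast_le.2 hmn)) ⟨m, hfinite⟩
  rw [hempty, measure_empty] at hcont
  simpa only [Function.comp_def, withDensity_apply _ measurableSet_Ioi] using hcont

theorem choquet_le_mul_add_tail [MeasurableSpace U] {ν : Set U → ℝ≥0∞}
    (hν : IsMonotoneMeasure ν) {f : U → ℝ≥0∞} (hf : Measurable f) {A : Set U}
    (hA : MeasurableSet A) {c : ℝ} (hc : 0 ≤ c) :
    Choquet ν f A ≤ ENNReal.ofReal c * ν A + ∫⁻ t in Ioi c, ν {x | ENNReal.ofReal t ≤ f x} := by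
  have hlevel (t : ℝ) : MeasurableSet {x | ENNReal.ofReal t ≤ f x} :=
    measurableSet_le measurable_const hf
  rw [Choquet, ← Ioc_union_Ioi_eq_Ioi hc, lintegral_union measurableSet_Ioi Ioc_disjoint_Ioi_same]
  gcongr ?_ + ?_
  · calc ∫⁻ t in Ioc 0 c, ν ({x | ENNReal.ofReal t ≤ f x} ∩ A)
        ≤ ∫⁻ _ in Ioc 0 c, ν A :=
          setLIntegral_mono' measurableSet_Ioc fun t _ =>
            hν.2 _ _ ((hlevel t).inter hA) hA inter_subset_right
      _ = ENNReal.ofReal c * ν A := by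
          rw [setLIntegral_const, Real.volume_Ioc, sub_zero, mul_comm]
  · exact setLIntegral_mono' measurableSet_Ioi fun t _ =>
      hν.2 _ _ ((hlevel t).inter hA) (hlevel t) inter_subset_left

theorem rn_implies_strong_abs_continuous_general [MeasurableSpace U] (μ ν : Set U → ENNReal)
    (hν : IsMonotoneMeasure ν)
    (hμfin : μ Set.univ ≠ ⊤)
    (f : U → ENNReal) (hf : Measurable f)
    (hRN : ∀ A : Set U, MeasurableSet A → μ A = Choquet ν f A) :
    ∀ ε : ENNReal, 0 < ε → ∃ δ : ENNReal, 0 < δ ∧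
      ∀ A : Set U, MeasurableSet A → ν A < δ → μ A < ε := by
  intro ε hε
  have hε2 : 0 < ε / 2 := ENNReal.half_pos hε.ne'
  have htail := tendsto_setLIntegral_Ioi_natCast_zero (ρ := volume)
    (g := fun t => ν {x | ENNReal.ofReal t ≤ f x}) (a := 0)
    (by simpa [hRN univ MeasurableSet.univ, Choquet] using hμfin)
  obtain ⟨n, hn, hn0⟩ :=
    ((htail.eventually (gt_mem_nhds hε2)).and (eventually_ne_atTop 0)).exists
  refine ⟨ε / 2 / n, ENNReal.div_pos hε2.ne' (ENNReal.natCast_ne_top n), fun A hA hνA => ?_⟩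
  rw [ENNReal.lt_div_iff_mul_lt (.inl (Nat.cast_ne_zero.2 hn0)) (.inl (ENNReal.natCast_ne_top n)),
    mul_comm, ← ENNReal.ofReal_natCast] at hνA
  calc μ A = Choquet ν f A := hRN A hA
    _ ≤ ENNReal.ofReal n * ν A + ∫⁻ t in Ioi (n : ℝ), ν {x | ENNReal.ofReal t ≤ f x} :=
        choquet_le_mul_add_tail hν hf hA n.cast_nonneg
    _ < ε / 2 + ε / 2 := ENNReal.add_lt_add hνA hn
    _ = ε := ENNReal.add_halves ε

theorem rn_implies_strong_abs_continuous [MeasurableSpace U] (μ ν : Set U → ENNReal)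
    (hμ : IsMonotoneMeasure μ) (hν : IsMonotoneMeasure ν)
    (hμfin : μ Set.univ ≠ ⊤) (hνfin : ν Set.univ ≠ ⊤)
    (f : U → ENNReal) (hf : Measurable f)
    (hRN : ∀ A : Set U, MeasurableSet A → μ A = Choquet ν f A) :
    ∀ ε : ENNReal, 0 < ε → ∃ δ : ENNReal, 0 < δ ∧
      ∀ A : Set U, MeasurableSet A → ν A < δ → μ A < ε :=
  rn_implies_strong_abs_continuous_general μ ν hν hμfin f hf hRN
end

section
/- For a lower continuous monotone measure ν and a nondecreasing sequence of nonnegative measurable functions fₙ ↑ f pointwise, the Choquet integrals converge: lim_{n→∞} ∫ fₙ dν = ∫ f dν. -/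
open MeasureTheory Filter Set
open scoped NNReal ENNReal NNRat

variable {U : Type*}

/-!
Write `f = ⨆ n, F n`. By lower continuity of `ν`, the distribution functions
`t ↦ ν {F n ≥ t}` increase to `g t = ν (⋃ n, {F n ≥ t})`, so the Choquet integrals of the `F n`
converge to `∫ g` by monotone convergence for the Lebesgue integral. Moreover
`ν {f ≥ s} ≤ g t ≤ ν {f ≥ t}` for `0 < t < s`, so `g` agrees with the antitone function
`t ↦ ν {f ≥ t}` at each of its continuity points, that is, off a countable set.
-/

theorem iUnion_superlevel_subset_superlevel_iSup {ι : Type*} (F : ι → U → ℝ≥0∞) (a : ℝ≥0∞) :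
    ⋃ i, {x | a ≤ F i x} ⊆ {x | a ≤ ⨆ i, F i x} := by
  simp only [iUnion_subset_iff]
  exact fun i x hx => hx.trans (le_iSup (F · x) i)

theorem superlevel_iSup_subset_iUnion_superlevel {ι : Type*} (F : ι → U → ℝ≥0∞) {a b : ℝ≥0∞}
    (hab : a < b) : {x | b ≤ ⨆ i, F i x} ⊆ ⋃ i, {x | a ≤ F i x} := fun _ hx =>
  let ⟨i, hi⟩ := lt_iSup_iff.1 (hab.trans_le hx)
  mem_iUnion.2 ⟨i, hi.le⟩

theorem ae_eq_of_antitone_of_squeeze {β : Type*} [LinearOrder β] [TopologicalSpace β]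
    [OrderTopology β] [SecondCountableTopology β] {μ : Measure ℝ} [NullSingletonClass μ]
    {g h : ℝ → β} (hh : Antitone h)
    (hgh : ∀ᵐ t ∂μ, g t ≤ h t ∧ ∀ s, t < s → h s ≤ g t) : g =ᵐ[μ] h := by
  filter_upwards [hgh, hh.countable_not_continuousAt.ae_notMem μ] with t ⟨hle, hlt⟩ hcont
  refine le_antisymm hle (le_of_tendsto ((not_not.1 hcont).continuousWithinAt (s := Ioi t)) ?_)
  filter_upwards [self_mem_nhdsWithin] with s hs
  exact hlt s hs

section

variable [MeasurableSpace U] {ν : Set U → ℝ≥0∞}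

theorem choquet_univ (f : U → ℝ≥0∞) :
    Choquet ν f univ = ∫⁻ t in Ioi (0 : ℝ), ν {x | ENNReal.ofReal t ≤ f x} := by
  simp only [Choquet, inter_univ]

theorem antitone_measure_superlevel
    (hν : ∀ A B : Set U, MeasurableSet A → MeasurableSet B → A ⊆ B → ν A ≤ ν B)
    {f : U → ℝ≥0∞} (hf : Measurable f) :
    Antitone fun t : ℝ => ν {x | ENNReal.ofReal t ≤ f x} := fun _ _ hst =>
  hν _ _ (measurableSet_le measurable_const hf) (measurableSet_le measurable_const hf)
    fun _ hx => (ENNReal.ofReal_le_ofReal hst).trans hx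

theorem ae_eq_superlevel_iUnion_superlevel_iSup {ι : Type*} [Countable ι]
    (hν : ∀ A B : Set U, MeasurableSet A → MeasurableSet B → A ⊆ B → ν A ≤ ν B)
    {F : ι → U → ℝ≥0∞} (hF : ∀ i, Measurable (F i)) :
    (fun t : ℝ => ν (⋃ i, {x | ENNReal.ofReal t ≤ F i x}))
      =ᵐ[volume.restrict (Ioi 0)] fun t => ν {x | ENNReal.ofReal t ≤ ⨆ i, F i x} := by
  have hsup : Measurable fun x => ⨆ i, F i x := Measurable.iSup hF
  have hunion (t : ℝ) : MeasurableSet (⋃ i, {x | ENNReal.ofReal t ≤ F i x}) :=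
    MeasurableSet.iUnion fun i => measurableSet_le measurable_const (hF i)
  refine ae_eq_of_antitone_of_squeeze (antitone_measure_superlevel hν hsup) ?_
  filter_upwards [ae_restrict_mem measurableSet_Ioi] with t (ht : 0 < t)
  refine ⟨hν _ _ (hunion t) (measurableSet_le measurable_const hsup)
    (iUnion_superlevel_subset_superlevel_iSup F _), fun s hts => ?_⟩
  exact hν _ _ (measurableSet_le measurable_const hsup) (hunion t)
    (superlevel_iSup_subset_iUnion_superlevel F
      ((ENNReal.ofReal_lt_ofReal_iff (ht.trans hts)).2 hts))

end

theorem choquet_monotone_convergence_general [MeasurableSpace U] (ν : Set U → ENNReal)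
    (hν : IsMonotoneMeasure ν)
    (hlc : ∀ A : ℕ → Set U, (∀ n, MeasurableSet (A n)) → Monotone A →
      Tendsto (fun n => ν (A n)) atTop (nhds (ν (⋃ n, A n))))
    (F : ℕ → U → ENNReal) (hF : ∀ n, Measurable (F n)) (hmono : Monotone F)
    (f : U → ENNReal)
    (hlim : ∀ x, Tendsto (fun n => F n x) atTop (nhds (f x))) :
    Tendsto (fun n => Choquet ν (F n) Set.univ) atTop
      (nhds (Choquet ν f Set.univ)) := by
  obtain rfl : f = fun x => ⨆ n, F n x := funext fun x =>
    tendsto_nhds_unique (hlim x) (tendsto_atTop_iSup fun _ _ hmn => hmono hmn x)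
  have hlevel (t : ℝ) (n : ℕ) : MeasurableSet {x | ENNReal.ofReal t ≤ F n x} :=
    measurableSet_le measurable_const (hF n)
  have hlevel_mono (t : ℝ) : Monotone fun n => {x | ENNReal.ofReal t ≤ F n x} :=
    fun _ _ hmn _ hx => hx.trans (hmono hmn _)
  simp only [choquet_univ]
  rw [← lintegral_congr_ae (ae_eq_superlevel_iUnion_superlevel_iSup hν.2 hF)]
  exact lintegral_tendsto_of_tendsto_of_monotone
    (fun n => (antitone_measure_superlevel hν.2 (hF n)).measurable.aemeasurable)
    (ae_of_all _ fun t _ _ hmn => hν.2 _ _ (hlevel t _) (hlevel t _) (hlevel_mono t hmn))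
    (ae_of_all _ fun t => hlc _ (hlevel t) (hlevel_mono t))

theorem choquet_monotone_convergence [MeasurableSpace U] (ν : Set U → ENNReal)
    (hν : IsMonotoneMeasure ν)
    (hlc : ∀ A : ℕ → Set U, (∀ n, MeasurableSet (A n)) → Monotone A →
      Tendsto (fun n => ν (A n)) atTop (nhds (ν (⋃ n, A n))))
    (F : ℕ → U → ENNReal) (hF : ∀ n, Measurable (F n)) (hmono : Monotone F)
    (f : U → ENNReal) (hf : Measurable f)
    (hlim : ∀ x, Tendsto (fun n => F n x) atTop (nhds (f x))) :
    Tendsto (fun n => Choquet ν (F n) Set.univ) atTop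
      (nhds (Choquet ν f Set.univ)) :=
  choquet_monotone_convergence_general ν hν hlc F hF hmono f hlim
end

section
/- Let μ, ν be σ-additive finite measures and for each α ∈ ℚ≥0 let A_α be a positive set of μ − α·ν with A_αᶜ a negative set, the family {A_α} decreasing with A_0 = U. Then μ ≪ ν (ν(A)=0 implies μ(A)=0) if and only if lim_{α→∞} max(μ(A_α), ν(A_α)) = 0. -/
open MeasureTheory Filter Set
open scoped NNReal ENNReal NNRat

variable {U : Type*}

open scoped Topology

/-! Since `α ν(A_α) ≤ μ(A_α) ≤ μ(U) < ∞`, we always have `ν(A_α) → 0`, and by continuity from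
above `μ(A_α) → μ(⋂ A_α)` with `ν(⋂ A_α) = 0`; so `μ ≪ ν` forces `μ(A_α) → 0`. Conversely, a
`ν`-null set `S` meets the negative set `A_αᶜ` in a `μ`-null set, hence `μ(S) ≤ μ(A_α) → 0`. -/

theorem NNRat.tendsto_coe_nnreal_atTop : Tendsto (fun α : ℚ≥0 => (α : ℝ≥0)) atTop atTop := by
  refine tendsto_atTop_atTop_of_monotone (fun _ _ h => by exact_mod_cast h) fun b => ⟨⌈b⌉₊, ?_⟩
  simpa using Nat.le_ceil b

theorem ENNReal.tendsto_nhds_zero_of_mul_le {ι : Type*} {l : Filter ι} {f c : ι → ℝ≥0∞}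
    {C : ℝ≥0∞} (hC : C ≠ ∞) (hc : Tendsto c l (𝓝 ∞)) (h : ∀ i, c i * f i ≤ C) :
    Tendsto f l (𝓝 0) := by
  have hlim : Tendsto (fun i => C / c i) l (𝓝 0) := by
    simpa using ENNReal.Tendsto.const_div hc (Or.inr hC)
  refine tendsto_of_tendsto_of_tendsto_of_le_of_le' tendsto_const_nhds hlim
    (.of_forall fun _ => zero_le) ?_
  filter_upwards [hc.eventually_ne ENNReal.zero_ne_top.symm] with i hi
  exact (ENNReal.le_div_iff_mul_le (Or.inl hi) (Or.inr hC)).2 (mul_comm (f i) _ ▸ h i)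

section Measure

variable [MeasurableSpace U] {μ ν : Measure U}

theorem measure_le_of_le_mul_on_compl {B S : Set U} {c : ℝ≥0∞} (hB : MeasurableSet B)
    (hneg : ∀ E, MeasurableSet E → E ⊆ Bᶜ → μ E ≤ c * ν E) (hS : MeasurableSet S)
    (hνS : ν S = 0) : μ S ≤ μ B := by
  have hdiff : μ (S \ B) = 0 := by
    refine le_antisymm ?_ zero_le
    calc μ (S \ B) ≤ c * ν (S \ B) := hneg _ (hS.diff hB) fun _ hx => hx.2
      _ = 0 := by rw [measure_mono_null sdiff_subset hνS, mul_zero]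
  calc μ S = μ (S ∩ B) + μ (S \ B) := (measure_inter_add_sdiff S hB).symm
    _ ≤ μ B := by rw [hdiff, add_zero]; exact measure_mono inter_subset_right

theorem measure_iInter_eq_zero_of_tendsto {ι : Type*} {l : Filter ι} [l.NeBot]
    {A : ι → Set U} (hν : Tendsto (fun i => ν (A i)) l (𝓝 0)) : ν (⋂ i, A i) = 0 :=
  le_antisymm (ge_of_tendsto' hν fun i => measure_mono (iInter_subset A i)) zero_le

theorem tendsto_measure_nhds_zero_of_coe_mul_le [IsFiniteMeasure μ] {A : ℚ≥0 → Set U}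
    (hpos : ∀ α : ℚ≥0, ((α : ℝ≥0) : ℝ≥0∞) * ν (A α) ≤ μ (A α)) :
    Tendsto (fun α => ν (A α)) atTop (𝓝 0) :=
  ENNReal.tendsto_nhds_zero_of_mul_le (measure_ne_top μ univ)
    (ENNReal.tendsto_coe_nhds_top.2 NNRat.tendsto_coe_nnreal_atTop)
    fun α => (hpos α).trans (measure_mono (subset_univ _))

end Measure

theorem abs_continuous_iff_tendsto_general [MeasurableSpace U] (μ ν : Measure U)
    [IsFiniteMeasure μ]
    (A : NNRat → Set U) (hA : ∀ α, MeasurableSet (A α)) (hanti : Antitone A)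
    (hpos : ∀ α : NNRat, ∀ E : Set U, MeasurableSet E → E ⊆ A α →
      ((α : ℝ≥0) : ENNReal) * ν E ≤ μ E)
    (hneg : ∀ α : NNRat, ∀ E : Set U, MeasurableSet E → E ⊆ (A α)ᶜ →
      μ E ≤ ((α : ℝ≥0) : ENNReal) * ν E) :
    (∀ S : Set U, MeasurableSet S → ν S = 0 → μ S = 0) ↔
    Tendsto (fun α : NNRat => max (μ (A α)) (ν (A α))) atTop (nhds 0) := by
  have hν : Tendsto (fun α => ν (A α)) atTop (𝓝 0) :=
    tendsto_measure_nhds_zero_of_coe_mul_le fun α => hpos α (A α) (hA α) subset_rfl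
  constructor
  · intro habs
    have hμ : Tendsto (fun α => μ (A α)) atTop (𝓝 (μ (⋂ α, A α))) :=
      tendsto_measure_iInter_atTop (fun α => (hA α).nullMeasurableSet) hanti
        ⟨0, measure_ne_top μ _⟩
    rw [habs _ (.iInter hA) (measure_iInter_eq_zero_of_tendsto hν)] at hμ
    simpa using hμ.max hν
  · intro h S hS hνS
    refine le_antisymm (ge_of_tendsto' h fun α => ?_) zero_le
    exact (measure_le_of_le_mul_on_compl (hA α) (hneg α) hS hνS).trans (le_max_left _ _)

theorem abs_continuous_iff_tendsto [MeasurableSpace U] (μ ν : Measure U)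
    [IsFiniteMeasure μ] [IsFiniteMeasure ν]
    (A : NNRat → Set U) (hA : ∀ α, MeasurableSet (A α)) (hanti : Antitone A)
    (hA0 : A 0 = Set.univ)
    (hpos : ∀ α : NNRat, ∀ E : Set U, MeasurableSet E → E ⊆ A α →
      ((α : ℝ≥0) : ENNReal) * ν E ≤ μ E)
    (hneg : ∀ α : NNRat, ∀ E : Set U, MeasurableSet E → E ⊆ (A α)ᶜ →
      μ E ≤ ((α : ℝ≥0) : ENNReal) * ν E) :
    (∀ S : Set U, MeasurableSet S → ν S = 0 → μ S = 0) ↔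
    Tendsto (fun α : NNRat => max (μ (A α)) (ν (A α))) atTop (nhds 0) :=
  abs_continuous_iff_tendsto_general μ ν A hA hanti hpos hneg
end

section
/- Let μ, λ, ν be finite monotone measures with ν weakly null-additive and null-continuous. Suppose f, g are nonnegative measurable functions with μ(A) = ∫_A f dν and λ(A) = ∫_A g dν for all measurable A, and f, g are comonotone. Then (μ+λ)(A) = ∫_A (f+g) dν for all measurable A; i.e., f+g is a Radon-Nikodym derivative of μ+λ with respect to ν. -/
open MeasureTheory Filter Set
open scoped NNReal ENNReal NNRat

variable {U : Type*}

/-- Squeeze lemma: a set between `Ioo 0 c` and `Ioc 0 c` has volume `ofReal c`. -/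
lemma aux_vol_squeeze (T : Set ℝ) (c : ℝ) (h1 : Set.Ioo 0 c ⊆ T) (h2 : T ⊆ Set.Ioc 0 c) :
    volume T = ENNReal.ofReal c := by
  refine le_antisymm ?_ ?_
  · calc volume T ≤ volume (Set.Ioc 0 c) := measure_mono h2
      _ = ENNReal.ofReal c := by rw [Real.volume_Ioc, sub_zero]
  · calc ENNReal.ofReal c = volume (Set.Ioo 0 c) := by rw [Real.volume_Ioo, sub_zero]
      _ ≤ volume T := measure_mono h1

/-- Layer-cake for antitone finite `ℝ≥0∞`-valued functions. -/
lemma aux_layer (φ : ℝ → ℝ≥0∞) (hmono : Antitone φ) (hfin : ∀ t, φ t ≠ ⊤) :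
    ∫⁻ t in Set.Ioi (0:ℝ), φ t
      = ∫⁻ y in Set.Ioi (0:ℝ), volume ({t | ENNReal.ofReal y < φ t} ∩ Set.Ioi 0) := by
  have hψ : Measurable fun t => (φ t).toReal := hmono.measurable.ennreal_toReal
  have key := lintegral_eq_lintegral_meas_lt (volume.restrict (Set.Ioi (0:ℝ)))
      (f := fun t => (φ t).toReal) (Eventually.of_forall fun t => ENNReal.toReal_nonneg)
      hψ.aemeasurable
  calc ∫⁻ t in Set.Ioi (0:ℝ), φ t
      = ∫⁻ t in Set.Ioi (0:ℝ), ENNReal.ofReal (φ t).toReal :=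
        lintegral_congr fun t => (ENNReal.ofReal_toReal (hfin t)).symm
    _ = ∫⁻ y in Set.Ioi (0:ℝ), (volume.restrict (Set.Ioi 0)) {t | y < (φ t).toReal} := key
    _ = _ := by
        refine lintegral_congr_ae ?_
        filter_upwards [ae_restrict_mem measurableSet_Ioi] with y hy
        rw [Measure.restrict_apply (measurableSet_lt measurable_const hψ)]
        congr 1
        ext t
        simp only [Set.mem_inter_iff, Set.mem_setOf_eq, and_congr_left_iff]
        intro _
        exact (ENNReal.ofReal_lt_iff_lt_toReal (le_of_lt hy) (hfin t)).symm

/-- Core additivity of the level-set interval lengths. -/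
lemma aux_vol_add (F G H : ℝ → ℝ≥0∞) (hFa : Antitone F) (hGa : Antitone G) (hHa : Antitone H)
    (hFH : ∀ t, F t ≤ H t) (hGH : ∀ t, G t ≤ H t) (Y : ℝ≥0∞)
    (hi : ∀ t₁ t₂ : ℝ, 0 < t₁ → 0 < t₂ → Y < F t₁ → Y < G t₂ → Y < H (t₁ + t₂))
    (hii : ∀ t₁ t₂ : ℝ, 0 < t₁ → 0 < t₂ → F t₁ ≤ Y → G t₂ ≤ Y → H (t₁ + t₂) ≤ Y) :
    volume ({t | Y < H t} ∩ Set.Ioi 0)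
      = volume ({t | Y < F t} ∩ Set.Ioi 0) + volume ({t | Y < G t} ∩ Set.Ioi 0) := by
  set TF := {t | Y < F t} ∩ Set.Ioi (0:ℝ) with hTF
  set TG := {t | Y < G t} ∩ Set.Ioi (0:ℝ) with hTG
  set TH := {t | Y < H t} ∩ Set.Ioi (0:ℝ) with hTH
  have hdF : ∀ t ∈ TF, ∀ s : ℝ, 0 < s → s ≤ t → s ∈ TF :=
    fun t ht s hs hst => ⟨lt_of_lt_of_le ht.1 (hFa hst), hs⟩
  have hdG : ∀ t ∈ TG, ∀ s : ℝ, 0 < s → s ≤ t → s ∈ TG :=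
    fun t ht s hs hst => ⟨lt_of_lt_of_le ht.1 (hGa hst), hs⟩
  have hdH : ∀ t ∈ TH, ∀ s : ℝ, 0 < s → s ≤ t → s ∈ TH :=
    fun t ht s hs hst => ⟨lt_of_lt_of_le ht.1 (hHa hst), hs⟩
  have hFsubH : TF ⊆ TH := fun t ht => ⟨lt_of_lt_of_le ht.1 (hFH t), ht.2⟩
  have hGsubH : TG ⊆ TH := fun t ht => ⟨lt_of_lt_of_le ht.1 (hGH t), ht.2⟩
  have hub : ∀ (T : Set ℝ), (∀ t ∈ T, ∀ s : ℝ, 0 < s → s ≤ t → s ∈ T) → ¬ BddAbove T →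
      volume T = ⊤ := by
    intro T hd hb
    rw [not_bddAbove_iff] at hb
    have : Set.Ioi (0:ℝ) ⊆ T := by
      intro t ht
      obtain ⟨t', ht', htt'⟩ := hb t
      exact hd t' ht' t ht (le_of_lt htt')
    exact top_le_iff.mp (Real.volume_Ioi ▸ measure_mono this)
  by_cases hbF : BddAbove TF
  · by_cases hbG : BddAbove TG
    · -- both bounded
      set sF := sSup TF with hsF
      set sG := sSup TG with hsG
      have hsF0 : 0 ≤ sF := by
        rcases TF.eq_empty_or_nonempty with he | ⟨t, ht⟩
        · rw [hsF, he, Real.sSup_empty]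
        · exact le_trans (le_of_lt ht.2) (le_csSup hbF ht)
      have hsG0 : 0 ≤ sG := by
        rcases TG.eq_empty_or_nonempty with he | ⟨t, ht⟩
        · rw [hsG, he, Real.sSup_empty]
        · exact le_trans (le_of_lt ht.2) (le_csSup hbG ht)
      have hIooF : Set.Ioo 0 sF ⊆ TF := by
        rintro t ⟨ht0, hts⟩
        have hne : TF.Nonempty := by
          by_contra he
          rw [Set.not_nonempty_iff_eq_empty] at he
          rw [hsF, he, Real.sSup_empty] at hts
          exact absurd (lt_trans ht0 hts) (lt_irrefl 0)
        obtain ⟨t', ht', htt'⟩ := exists_lt_of_lt_csSup hne hts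
        exact hdF t' ht' t ht0 (le_of_lt htt')
      have hIooG : Set.Ioo 0 sG ⊆ TG := by
        rintro t ⟨ht0, hts⟩
        have hne : TG.Nonempty := by
          by_contra he
          rw [Set.not_nonempty_iff_eq_empty] at he
          rw [hsG, he, Real.sSup_empty] at hts
          exact absurd (lt_trans ht0 hts) (lt_irrefl 0)
        obtain ⟨t', ht', htt'⟩ := exists_lt_of_lt_csSup hne hts
        exact hdG t' ht' t ht0 (le_of_lt htt')
      have hvF : volume TF = ENNReal.ofReal sF :=
        aux_vol_squeeze TF sF hIooF (fun t ht => ⟨ht.2, le_csSup hbF ht⟩)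
      have hvG : volume TG = ENNReal.ofReal sG :=
        aux_vol_squeeze TG sG hIooG (fun t ht => ⟨ht.2, le_csSup hbG ht⟩)
      have hHup : TH ⊆ Set.Ioc 0 (sF + sG) := by
        rintro t ⟨htY, ht0⟩
        refine ⟨ht0, ?_⟩
        by_contra hcon
        push_neg at hcon
        set δ := (t - (sF + sG)) / 2 with hδdef
        have hδ : 0 < δ := by simp only [hδdef]; linarith
        have ht₁ : (0:ℝ) < sF + δ := by linarith
        have ht₂ : (0:ℝ) < sG + δ := by linarith
        have hF1 : F (sF + δ) ≤ Y := by
          by_contra hc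
          push_neg at hc
          have : sF + δ ≤ sF := le_csSup hbF ⟨hc, ht₁⟩
          linarith
        have hG1 : G (sG + δ) ≤ Y := by
          by_contra hc
          push_neg at hc
          have : sG + δ ≤ sG := le_csSup hbG ⟨hc, ht₂⟩
          linarith
        have := hii (sF + δ) (sG + δ) ht₁ ht₂ hF1 hG1
        have heq : sF + δ + (sG + δ) = t := by simp only [hδdef]; ring
        rw [heq] at this
        exact absurd htY (not_lt.mpr this)
      have hHlo : Set.Ioo 0 (sF + sG) ⊆ TH := by
        rintro t ⟨ht0, hts⟩
        rcases TF.eq_empty_or_nonempty with heF | hneF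
        · have hsF0' : sF = 0 := by rw [hsF, heF, Real.sSup_empty]
          exact hGsubH (hIooG ⟨ht0, by linarith⟩)
        · rcases TG.eq_empty_or_nonempty with heG | hneG
          · have hsG0' : sG = 0 := by rw [hsG, heG, Real.sSup_empty]
            exact hFsubH (hIooF ⟨ht0, by linarith⟩)
          · set ε := (sF + sG - t) / 2 with hεdef
            have hε : 0 < ε := by simp only [hεdef]; linarith
            obtain ⟨t₁, ht₁mem, ht₁⟩ := exists_lt_of_lt_csSup hneF (show sF - ε < sF by linarith)
            obtain ⟨t₂, ht₂mem, ht₂⟩ := exists_lt_of_lt_csSup hneG (show sG - ε < sG by linarith)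
            have hY : Y < H (t₁ + t₂) :=
              hi t₁ t₂ ht₁mem.2 ht₂mem.2 ht₁mem.1 ht₂mem.1
            have htle : t ≤ t₁ + t₂ := by simp only [hεdef] at ht₁ ht₂ ⊢; linarith
            exact ⟨lt_of_lt_of_le hY (hHa htle), ht0⟩
      have hvH : volume TH = ENNReal.ofReal (sF + sG) := aux_vol_squeeze TH _ hHlo hHup
      rw [hvF, hvG, hvH, ENNReal.ofReal_add hsF0 hsG0]
    · rw [hub TG hdG hbG, hub TH hdH
        (fun hb => hbG (hb.mono hGsubH)), add_top]
  · rw [hub TF hdF hbF, hub TH hdH (fun hb => hbF (hb.mono hFsubH)), top_add]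

theorem rn_derivative_add [MeasurableSpace U] (μ lam ν : Set U → ENNReal)
    (hμ : IsMonotoneMeasure μ) (hlam : IsMonotoneMeasure lam)
    (hν : IsMonotoneMeasure ν)
    (hμfin : μ Set.univ ≠ ⊤) (hlamfin : lam Set.univ ≠ ⊤) (hνfin : ν Set.univ ≠ ⊤)
    (hwna : ∀ A B : Set U, MeasurableSet A → MeasurableSet B →
      ν A = 0 → ν B = 0 → ν (A ∪ B) = 0)
    (hnc : ∀ A : ℕ → Set U, (∀ n, MeasurableSet (A n)) → Monotone A →
      (∀ n, ν (A n) = 0) → ν (⋃ n, A n) = 0)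
    (f g : U → ENNReal) (hf : Measurable f) (hg : Measurable g)
    (hco : Comonotone f g)
    (hRNf : ∀ S : Set U, MeasurableSet S → μ S = Choquet ν f S)
    (hRNg : ∀ S : Set U, MeasurableSet S → lam S = Choquet ν g S) :
    ∀ S : Set U, MeasurableSet S →
      μ S + lam S = Choquet ν (fun x => f x + g x) S := by
  intro S hS
  rw [hRNf S hS, hRNg S hS]
  -- measurable level sets
  have hmf : ∀ c : ℝ≥0∞, MeasurableSet ({x | c ≤ f x} ∩ S) :=
    fun c => (measurableSet_le measurable_const hf).inter hS
  have hmg : ∀ c : ℝ≥0∞, MeasurableSet ({x | c ≤ g x} ∩ S) :=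
    fun c => (measurableSet_le measurable_const hg).inter hS
  have hmh : ∀ c : ℝ≥0∞, MeasurableSet ({x | c ≤ f x + g x} ∩ S) :=
    fun c => (measurableSet_le measurable_const (hf.add hg)).inter hS
  set F : ℝ → ℝ≥0∞ := fun t => ν ({x | ENNReal.ofReal t ≤ f x} ∩ S) with hFdef
  set G : ℝ → ℝ≥0∞ := fun t => ν ({x | ENNReal.ofReal t ≤ g x} ∩ S) with hGdef
  set H : ℝ → ℝ≥0∞ := fun t => ν ({x | ENNReal.ofReal t ≤ f x + g x} ∩ S) with hHdef
  have hFa : Antitone F := fun s t hst =>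
    hν.2 _ _ (hmf _) (hmf _)
      (fun x hx => ⟨le_trans (ENNReal.ofReal_le_ofReal hst) hx.1, hx.2⟩)
  have hGa : Antitone G := fun s t hst =>
    hν.2 _ _ (hmg _) (hmg _)
      (fun x hx => ⟨le_trans (ENNReal.ofReal_le_ofReal hst) hx.1, hx.2⟩)
  have hHa : Antitone H := fun s t hst =>
    hν.2 _ _ (hmh _) (hmh _)
      (fun x hx => ⟨le_trans (ENNReal.ofReal_le_ofReal hst) hx.1, hx.2⟩)
  have hfinν : ∀ (T : Set U), MeasurableSet T → ν T ≠ ⊤ := fun T hT =>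
    fun he => hνfin (top_le_iff.mp
      (he ▸ hν.2 T Set.univ hT MeasurableSet.univ (Set.subset_univ T)))
  have hFfin : ∀ t, F t ≠ ⊤ := fun t => hfinν _ (hmf _)
  have hGfin : ∀ t, G t ≠ ⊤ := fun t => hfinν _ (hmg _)
  have hHfin : ∀ t, H t ≠ ⊤ := fun t => hfinν _ (hmh _)
  have hFH : ∀ t, F t ≤ H t := fun t =>
    hν.2 _ _ (hmf _) (hmh _) (fun x hx => ⟨show ENNReal.ofReal t ≤ f x + g x from le_trans hx.1 le_self_add, hx.2⟩)
  have hGH : ∀ t, G t ≤ H t := fun t =>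
    hν.2 _ _ (hmg _) (hmh _) (fun x hx => ⟨show ENNReal.ofReal t ≤ f x + g x from le_trans hx.1 le_add_self, hx.2⟩)
  -- the chain property of level sets
  have chain : ∀ c d : ℝ≥0∞, ({x | c ≤ f x} ∩ S) ⊆ ({x | d ≤ g x} ∩ S) ∨
      ({x | d ≤ g x} ∩ S) ⊆ ({x | c ≤ f x} ∩ S) := by
    intro c d
    by_contra hcon
    push_neg at hcon
    rcases Set.not_subset.mp hcon.1 with ⟨p, hp, hpn⟩
    rcases Set.not_subset.mp hcon.2 with ⟨q, hq, hqn⟩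
    have hgp : ¬ d ≤ g p := fun h => hpn ⟨h, hp.2⟩
    have hfq : ¬ c ≤ f q := fun h => hqn ⟨h, hq.2⟩
    rcases hco p q with ⟨h1, _⟩ | ⟨_, h2⟩
    · exact hfq (le_trans hp.1 h1)
    · exact hgp (le_trans hq.1 h2)
  have hi : ∀ (Y : ℝ≥0∞) (t₁ t₂ : ℝ), 0 < t₁ → 0 < t₂ → Y < F t₁ → Y < G t₂ →
      Y < H (t₁ + t₂) := by
    intro Y t₁ t₂ ht₁ ht₂ hYF hYG
    have hsum : ({x | ENNReal.ofReal t₁ ≤ f x} ∩ S) ∩ ({x | ENNReal.ofReal t₂ ≤ g x} ∩ S)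
        ⊆ {x | ENNReal.ofReal (t₁ + t₂) ≤ f x + g x} ∩ S := by
      rintro x ⟨⟨hx1, hxS⟩, ⟨hx2, _⟩⟩
      refine ⟨show ENNReal.ofReal (t₁ + t₂) ≤ f x + g x from ?_, hxS⟩
      rw [ENNReal.ofReal_add (le_of_lt ht₁) (le_of_lt ht₂)]
      exact add_le_add (hx1 : ENNReal.ofReal t₁ ≤ f x) (hx2 : ENNReal.ofReal t₂ ≤ g x)
    rcases chain (ENNReal.ofReal t₁) (ENNReal.ofReal t₂) with hsub | hsub
    · refine lt_of_lt_of_le hYF (hν.2 _ _ (hmf _) (hmh _) ?_)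
      exact fun x hx => hsum ⟨hx, hsub hx⟩
    · refine lt_of_lt_of_le hYG (hν.2 _ _ (hmg _) (hmh _) ?_)
      exact fun x hx => hsum ⟨hsub hx, hx⟩
  have hii : ∀ (Y : ℝ≥0∞) (t₁ t₂ : ℝ), 0 < t₁ → 0 < t₂ → F t₁ ≤ Y → G t₂ ≤ Y →
      H (t₁ + t₂) ≤ Y := by
    intro Y t₁ t₂ ht₁ ht₂ hYF hYG
    have hcover : {x | ENNReal.ofReal (t₁ + t₂) ≤ f x + g x} ∩ S
        ⊆ ({x | ENNReal.ofReal t₁ ≤ f x} ∩ S) ∪ ({x | ENNReal.ofReal t₂ ≤ g x} ∩ S) := by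
      rintro x ⟨hx, hxS⟩
      by_contra hxn
      have h1 : f x < ENNReal.ofReal t₁ :=
        lt_of_not_ge (fun h => hxn (Or.inl ⟨h, hxS⟩))
      have h2 : g x < ENNReal.ofReal t₂ :=
        lt_of_not_ge (fun h => hxn (Or.inr ⟨h, hxS⟩))
      have : f x + g x < ENNReal.ofReal (t₁ + t₂) := by
        rw [ENNReal.ofReal_add (le_of_lt ht₁) (le_of_lt ht₂)]
        exact ENNReal.add_lt_add h1 h2
      exact absurd hx (not_le.mpr this)
    rcases chain (ENNReal.ofReal t₁) (ENNReal.ofReal t₂) with hsub | hsub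
    · refine le_trans (hν.2 _ _ (hmh _) (hmg _) ?_) hYG
      exact fun x hx => (hcover hx).elim (fun h => hsub h) id
    · refine le_trans (hν.2 _ _ (hmh _) (hmf _) ?_) hYF
      exact fun x hx => (hcover hx).elim id (fun h => hsub h)
  show (∫⁻ t in Set.Ioi (0:ℝ), F t) + (∫⁻ t in Set.Ioi (0:ℝ), G t)
      = ∫⁻ t in Set.Ioi (0:ℝ), H t
  rw [aux_layer F hFa hFfin, aux_layer G hGa hGfin, aux_layer H hHa hHfin]
  have hmvF : Measurable fun y : ℝ =>
      volume ({t | ENNReal.ofReal y < F t} ∩ Set.Ioi (0:ℝ)) := by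
    apply Antitone.measurable
    intro y y' hyy'
    refine measure_mono (fun t ht => ⟨lt_of_le_of_lt (ENNReal.ofReal_le_ofReal hyy') ht.1, ht.2⟩)
  rw [← lintegral_add_left hmvF]
  refine lintegral_congr_ae ?_
  filter_upwards [ae_restrict_mem measurableSet_Ioi] with y _
  exact (aux_vol_add F G H hFa hGa hHa hFH hGH (ENNReal.ofReal y)
    (hi _) (hii _)).symm
end

section
/- Let U = ℕ with the power set σ-algebra, ν(A) = 1 for A ≠ ∅ and ν(∅) = 0, and μ(A) = max A for finite nonempty A, μ(∅)=0, μ(A) = ∞ for infinite A. Then for the family A_α = [α, ∞) ∩ ℕ (α ∈ ℚ≥0), the pair (μ, ν) has the decomposition property, and μ(A) = ∫_A f dν (Choquet integral) for all A ⊆ ℕ, where f(x) = x. -/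
open MeasureTheory Filter Set
open scoped NNReal ENNReal NNRat

variable {U : Type*}

lemma nu_eq_one {B : Set ℕ} (h : B.Nonempty) : (⨆ _n ∈ B, (1 : ENNReal)) = 1 := by
  obtain ⟨n, hn⟩ := h
  refine le_antisymm (iSup₂_le fun _ _ => le_rfl) ?_
  exact le_iSup₂_of_le n hn le_rfl

lemma mu_mono {A B : Set ℕ} (h : A ⊆ B) :
    (⨆ n ∈ A, (n : ENNReal)) ≤ ⨆ n ∈ B, (n : ENNReal) :=
  iSup₂_le fun n hn => le_iSup₂_of_le n (h hn) le_rfl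

theorem example_nat_decomp_and_rn :
    DecompProp (fun A : Set ℕ => ⨆ n ∈ A, (n : ENNReal))
      (fun A : Set ℕ => ⨆ _n ∈ A, (1 : ENNReal))
      (fun α : NNRat => {n : ℕ | (α : ℝ≥0) ≤ (n : ℝ≥0)}) ∧
    ∀ A : Set ℕ,
      (⨆ n ∈ A, (n : ENNReal)) =
        Choquet (fun A : Set ℕ => ⨆ _n ∈ A, (1 : ENNReal))
          (fun n : ℕ => (n : ENNReal)) A := by
  constructor
  · refine ⟨fun α => MeasurableSpace.measurableSet_top, ?_, ?_, ?_⟩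
    · ext n; simp
    · intro α β hab n hn
      have : ((α : ℝ≥0)) ≤ (β : ℝ≥0) := by exact_mod_cast hab
      exact le_trans this hn
    · intro S _ _ _ α β hαβ
      beta_reduce
      have hsub : S ∩ {n : ℕ | (β : ℝ≥0) ≤ (n : ℝ≥0)} ⊆ S ∩ {n : ℕ | (α : ℝ≥0) ≤ (n : ℝ≥0)} := by
        apply Set.inter_subset_inter_right
        intro n hn
        have : ((α : ℝ≥0)) ≤ (β : ℝ≥0) := by exact_mod_cast hαβ.le
        exact le_trans this hn
      by_cases hβne : (S ∩ {n : ℕ | (β : ℝ≥0) ≤ (n : ℝ≥0)}).Nonempty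
      · have hαne : (S ∩ {n : ℕ | (α : ℝ≥0) ≤ (n : ℝ≥0)}).Nonempty := hβne.mono hsub
        have hμeq : (⨆ n ∈ S ∩ {n : ℕ | (α : ℝ≥0) ≤ (n : ℝ≥0)}, (n : ENNReal))
            = ⨆ n ∈ S ∩ {n : ℕ | (β : ℝ≥0) ≤ (n : ℝ≥0)}, (n : ENNReal) := by
          refine le_antisymm ?_ (mu_mono hsub)
          obtain ⟨m, hmS, hmβ⟩ := hβne
          refine iSup₂_le fun n hn => ?_
          by_cases h : (β : ℝ≥0) ≤ (n : ℝ≥0)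
          · exact le_iSup₂_of_le n ⟨hn.1, h⟩ le_rfl
          · have hnm : n ≤ m := by
              have : (n : ℝ≥0) ≤ (m : ℝ≥0) := le_trans (lt_of_not_ge h).le hmβ
              exact_mod_cast this
            exact le_iSup₂_of_le m ⟨hmS, hmβ⟩ (by exact_mod_cast hnm)
        simp only [nu_eq_one hαne, nu_eq_one hβne, mul_one, hμeq]
        exact ⟨le_of_eq (add_comm _ _), le_of_eq (add_comm _ _)⟩
      · rw [Set.not_nonempty_iff_eq_empty] at hβne
        rw [hβne]
        have hμ0 : (⨆ n ∈ (∅ : Set ℕ), (n : ENNReal)) = 0 := by simp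
        have hν0 : (⨆ _n ∈ (∅ : Set ℕ), (1 : ENNReal)) = 0 := by simp
        by_cases hαne : (S ∩ {n : ℕ | (α : ℝ≥0) ≤ (n : ℝ≥0)}).Nonempty
        · simp only [hμ0, hν0, nu_eq_one hαne, mul_one, mul_zero, add_zero]
          constructor
          · obtain ⟨n, hnS, hnα⟩ := hαne
            have h1 : ((α : ℝ≥0) : ENNReal) ≤ (n : ENNReal) := by exact_mod_cast hnα
            have hmem : n ∈ S ∩ {n : ℕ | (α : ℝ≥0) ≤ (n : ℝ≥0)} := ⟨hnS, hnα⟩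
            exact h1.trans (le_iSup₂_of_le n hmem le_rfl)
          · refine iSup₂_le fun n hn => ?_
            have hnβ : ¬ ((β : ℝ≥0) ≤ (n : ℝ≥0)) := by
              intro h
              have : n ∈ S ∩ {n : ℕ | (β : ℝ≥0) ≤ (n : ℝ≥0)} := ⟨hn.1, h⟩
              rw [hβne] at this
              exact this
            have : (n : ℝ≥0) ≤ (β : ℝ≥0) := (lt_of_not_ge hnβ).le
            exact_mod_cast this
        · rw [Set.not_nonempty_iff_eq_empty] at hαne
          simp only [hαne, hμ0, hν0, mul_zero, add_zero, zero_add]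
          exact ⟨le_rfl, le_rfl⟩
  · intro A
    set c := ⨆ n ∈ A, (n : ENNReal) with hc
    unfold Choquet
    by_cases hctop : c = ⊤
    · have h1 : ∀ t : ℝ, ({x : ℕ | ENNReal.ofReal t ≤ ((x : ℕ) : ENNReal)} ∩ A).Nonempty := by
        intro t
        have hlt : ENNReal.ofReal t < c := hctop ▸ ENNReal.ofReal_lt_top
        rw [hc, lt_iSup_iff] at hlt
        obtain ⟨n, hn⟩ := hlt
        rw [lt_iSup_iff] at hn
        obtain ⟨hnA, hlt'⟩ := hn
        exact ⟨n, hlt'.le, hnA⟩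
      have heq : ∀ t : ℝ,
          (⨆ _n ∈ ({x : ℕ | ENNReal.ofReal t ≤ ((x : ℕ) : ENNReal)} ∩ A), (1 : ENNReal)) = 1 :=
        fun t => nu_eq_one (h1 t)
      rw [hctop]
      simp only [heq]
      rw [setLIntegral_const]
      simp [Real.volume_Ioi]
    · have hA_le : ∀ n ∈ A, (n : ENNReal) ≤ c := fun n hn => le_iSup₂_of_le n hn le_rfl
      have key : ∀ t ∈ Set.Ioi (0 : ℝ), t ≠ c.toReal →
          (⨆ _n ∈ ({x : ℕ | ENNReal.ofReal t ≤ ((x : ℕ) : ENNReal)} ∩ A), (1 : ENNReal))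
            = Set.indicator (Set.Ioc (0 : ℝ) c.toReal) (fun _ => (1 : ENNReal)) t := by
        intro t ht htne
        rcases lt_or_gt_of_ne htne with hlt | hgt
        · have h1 : ENNReal.ofReal t < c := by
            rw [← ENNReal.ofReal_toReal hctop]
            exact (ENNReal.ofReal_lt_ofReal_iff (lt_trans ht hlt)).mpr hlt
          rw [hc, lt_iSup_iff] at h1
          obtain ⟨n, hn⟩ := h1
          rw [lt_iSup_iff] at hn
          obtain ⟨hnA, hlt'⟩ := hn
          have hmem : n ∈ {x : ℕ | ENNReal.ofReal t ≤ ((x : ℕ) : ENNReal)} ∩ A := ⟨hlt'.le, hnA⟩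
          have htmem : t ∈ Set.Ioc (0 : ℝ) c.toReal := ⟨ht, hlt.le⟩
          rw [nu_eq_one ⟨n, hmem⟩, Set.indicator_of_mem htmem]
        · have hempty : {x : ℕ | ENNReal.ofReal t ≤ ((x : ℕ) : ENNReal)} ∩ A = ∅ := by
            ext x
            simp only [Set.mem_inter_iff, Set.mem_setOf_eq, Set.mem_empty_iff_false, iff_false,
              not_and]
            intro hle hxA
            have hxc : (x : ENNReal) ≤ c := hA_le x hxA
            have hlt2 : c < ENNReal.ofReal t := by
              rw [← ENNReal.ofReal_toReal hctop]
              exact (ENNReal.ofReal_lt_ofReal_iff ht).mpr hgt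
            exact absurd (hle.trans hxc) hlt2.not_ge
          rw [hempty, Set.indicator_of_notMem (fun hmem => absurd hmem.2 (not_le.mpr hgt))]
          simp
      have hae : (fun t : ℝ =>
            ⨆ _n ∈ ({x : ℕ | ENNReal.ofReal t ≤ ((x : ℕ) : ENNReal)} ∩ A), (1 : ENNReal))
          =ᵐ[volume.restrict (Set.Ioi (0 : ℝ))]
          Set.indicator (Set.Ioc (0 : ℝ) c.toReal) (fun _ => (1 : ENNReal)) := by
        have h0 : ∀ᵐ t : ℝ, t ≠ c.toReal := by
          have hset : {t : ℝ | ¬ t ≠ c.toReal} = {c.toReal} := by ext t; simp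
          rw [ae_iff, hset]
          exact measure_singleton _
        filter_upwards [ae_restrict_of_ae h0, ae_restrict_mem measurableSet_Ioi] with t h1 h2
        exact key t h2 h1
      rw [lintegral_congr_ae hae, lintegral_indicator measurableSet_Ioc,
        Measure.restrict_restrict measurableSet_Ioc]
      have hint : Set.Ioc (0 : ℝ) c.toReal ∩ Set.Ioi 0 = Set.Ioc 0 c.toReal :=
        Set.inter_eq_left.mpr Set.Ioc_subset_Ioi_self
      rw [hint, setLIntegral_one, Real.volume_Ioc, sub_zero, ENNReal.ofReal_toReal hctop]
end
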